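/- arXiv:2408.15010 — 7 statements merged into one kernel-verified Lean document; each statement's English description precedes it below -/
import Mathlib

section
/- For p > 2n+1 and q > -1, the finite orthogonal polynomials M_n^{(p,q)}(x) = (-1)^n n! Σ_{j=0}^n C(p-n-1, j) C(q+n, n-j) (-x)^j satisfy the orthogonality relation ∫_0^∞ x^q (1+x)^{-(p+q)} M_r^{(p,q)}(x) M_n^{(p,q)}(x) dx = [n! Γ(p-n) Γ(q+n+1) / ((p-2n-1) Γ(p+q-n))] δ_{r,n}, valid when p > 2·max{n,r}+1. -/
open Finset MeasureTheory Real Filter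

/-- Pochhammer symbol `(a)_k = a (a+1) ⋯ (a+k-1)` for a real `a`. -/
noncomputable def poch (a : ℝ) (k : ℕ) : ℝ := ∏ i ∈ Finset.range k, (a + i)

/-- Generalized binomial coefficient `C(a, j)` for real `a`. -/
noncomputable def rchoose (a : ℝ) (j : ℕ) : ℝ := (-1 : ℝ) ^ j * poch (-a) j / j.factorial

/-- The finite orthogonal polynomials `M_n^{(p,q)}(x)`. -/
noncomputable def Mfin (p q : ℝ) (n : ℕ) (x : ℝ) : ℝ :=
  (-1 : ℝ) ^ n * n.factorial *
    ∑ j ∈ Finset.range (n + 1), rchoose (p - n - 1) j * rchoose (q + n) (n - j) * (-x) ^ j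

/-- The first set of finite biorthogonal polynomials `M_n(p,q,υ;x)`. -/
noncomputable def Mbio (p q : ℝ) (υ n : ℕ) (x : ℝ) : ℝ :=
  (-1 : ℝ) ^ n * poch (q + 1) (υ * n) *
    ∑ j ∈ Finset.range (n + 1), (-1 : ℝ) ^ j * (n.choose j : ℝ) *
      (poch (n + 1 - p) (υ * j) / poch (q + 1) (υ * j)) * (-x) ^ (υ * j)

/-- The second set of finite biorthogonal polynomials `𝔐_n(p,q,υ;x)`. -/
noncomputable def Mfrak (p q : ℝ) (υ n : ℕ) (x : ℝ) : ℝ :=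
  ∑ r ∈ Finset.range (n + 1), ∑ s ∈ Finset.range (r + 1),
    (-1 : ℝ) ^ (s + n) * (r.choose s : ℝ) * (poch (p + q - n) r / r.factorial) *
      poch ((s + q + 1) / υ) n * x ^ r * (1 + x) ^ (n - r)



lemma poch_zero (a : ℝ) : poch a 0 = 1 := by simp [poch]

lemma poch_succ (a : ℝ) (k : ℕ) : poch a (k+1) = poch a k * (a + k) := by
  simp [poch, Finset.prod_range_succ]

lemma poch_succ' (a : ℝ) (k : ℕ) : poch a (k+1) = a * poch (a+1) k := by
  simp only [poch, Finset.prod_range_succ', Nat.cast_zero, add_zero]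
  rw [mul_comm]
  congr 1
  exact Finset.prod_congr rfl fun i _ => by push_cast; ring

lemma poch_add (a : ℝ) (m k : ℕ) : poch a (m + k) = poch a m * poch (a + m) k := by
  induction k with
  | zero => simp [poch_zero]
  | succ k ih =>
    rw [← Nat.add_assoc, poch_succ, ih, poch_succ]
    push_cast
    ring

lemma poch_pos {a : ℝ} (ha : 0 < a) (k : ℕ) : 0 < poch a k := by
  apply Finset.prod_pos
  intro i _
  positivity

lemma poch_vandermonde (x y : ℝ) (n : ℕ) :
    ∑ j ∈ range (n+1), (n.choose j : ℝ) * poch x j * poch y (n - j) = poch (x+y) n := by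
  induction n with
  | zero => simp [poch_zero]
  | succ n ih =>
    have key : ∑ j ∈ range (n+1), (n.choose j : ℝ) * poch x (j+1) * poch y (n-j)
             + ∑ j ∈ range (n+1), (n.choose j : ℝ) * poch x j * poch y (n-j+1)
             = poch (x+y) (n+1) := by
      rw [poch_succ, ← ih, Finset.sum_mul, ← Finset.sum_add_distrib]
      apply Finset.sum_congr rfl
      intro j hj
      rw [Finset.mem_range] at hj
      have hjn : j ≤ n := Nat.lt_succ_iff.mp hj
      have hc : ((n - j : ℕ) : ℝ) = (n : ℝ) - j := by
        rw [Nat.cast_sub hjn]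
      rw [poch_succ, poch_succ, hc]
      push_cast
      ring
    rw [← key]
    rw [Finset.sum_range_succ' (fun j => (((n+1).choose j : ℕ) : ℝ) * poch x j * poch y (n+1-j)) (n+1)]
    simp only [Nat.succ_sub_succ, Nat.choose_zero_right, Nat.cast_one, one_mul, poch_zero,
      Nat.sub_zero]
    have step : ∀ j ∈ range (n+1), (((n+1).choose (j+1) : ℕ) : ℝ) * poch x (j+1) * poch y (n-j)
        = (n.choose j : ℝ) * poch x (j+1) * poch y (n-j)
          + (n.choose (j+1) : ℝ) * poch x (j+1) * poch y (n-j) := by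
      intro j _
      rw [Nat.choose_succ_succ]
      push_cast
      ring
    rw [Finset.sum_congr rfl step, Finset.sum_add_distrib]
    have hB : ∑ j ∈ range (n+1), (n.choose (j+1) : ℝ) * poch x (j+1) * poch y (n-j)
        + poch y (n+1)
        = ∑ j ∈ range (n+1), (n.choose j : ℝ) * poch x j * poch y (n-j+1) := by
      rw [Finset.sum_range_succ (fun j => (n.choose (j+1) : ℝ) * poch x (j+1) * poch y (n-j)) n]
      simp only [Nat.choose_succ_self, Nat.cast_zero, zero_mul, add_zero]
      rw [Finset.sum_range_succ' (fun j => (n.choose j : ℝ) * poch x j * poch y (n-j+1)) n]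
      simp only [Nat.choose_zero_right, Nat.cast_one, one_mul, poch_zero, Nat.sub_zero]
      congr 1
      apply Finset.sum_congr rfl
      intro j hj
      rw [Finset.mem_range] at hj
      have : n - (j+1) + 1 = n - j := by omega
      rw [this]
    rw [add_assoc, hB]

lemma poch_one_eq_factorial (n : ℕ) : poch 1 n = n.factorial := by
  induction n with
  | zero => simp [poch_zero]
  | succ n ih => rw [poch_succ, ih, Nat.factorial_succ]; push_cast; ring

lemma poch_neg (a : ℝ) (k : ℕ) : poch (-a) k = (-1)^k * poch (a - k + 1) k := by
  have h := Finset.prod_range_reflect (fun i : ℕ => (a - k + 1 + i)) k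
  have h2 : ∀ j ∈ range k, a - k + 1 + ((k - 1 - j : ℕ) : ℝ) = a - j := by
    intro j hj
    rw [Finset.mem_range] at hj
    have : ((k - 1 - j : ℕ) : ℝ) = (k : ℝ) - 1 - j := by
      have : k - 1 - j + (j + 1) = k := by omega
      have := congrArg (Nat.cast (R := ℝ)) this
      push_cast at this
      linarith
    rw [this]; ring
  rw [Finset.prod_congr rfl h2] at h
  unfold poch
  rw [← h]
  calc ∏ i ∈ range k, (-a + (i:ℝ)) = ∏ i ∈ range k, (-1 : ℝ) * (a - i) :=
        Finset.prod_congr rfl fun i _ => by ring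
    _ = (-1)^k * ∏ i ∈ range k, (a - (i:ℝ)) := by
        rw [Finset.prod_mul_distrib, Finset.prod_const, Finset.card_range]

lemma rchoose_reflect (a : ℝ) (k : ℕ) : rchoose a k = (-1)^k * rchoose ((k:ℝ) - a - 1) k := by
  unfold rchoose
  rw [poch_neg a k]
  have : -((k:ℝ) - a - 1) = a - k + 1 := by ring
  rw [this]
  ring

lemma rchoose_nat_lt {m n : ℕ} (h : m < n) : rchoose (m:ℝ) n = 0 := by
  unfold rchoose poch
  rw [Finset.prod_eq_zero (Finset.mem_range.mpr h) (by push_cast; ring : -(m:ℝ) + (m:ℕ) = 0)]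
  simp

lemma rchoose_nat_self (n : ℕ) : rchoose (n:ℝ) n = 1 := by
  unfold rchoose
  rw [poch_neg (n:ℝ) n]
  have : (n:ℝ) - n + 1 = 1 := by ring
  rw [this, poch_one_eq_factorial]
  rw [← mul_assoc, ← mul_pow]
  simp [div_self (Nat.cast_ne_zero.mpr n.factorial_ne_zero : (n.factorial : ℝ) ≠ 0)]

lemma rchoose_vandermonde (a b : ℝ) (n : ℕ) :
    ∑ j ∈ range (n+1), rchoose a j * rchoose b (n-j) = rchoose (a+b) n := by
  have step : ∀ j ∈ range (n+1), rchoose a j * rchoose b (n-j)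
      = (-1:ℝ)^n / n.factorial * ((n.choose j : ℝ) * poch (-a) j * poch (-b) (n-j)) := by
    intro j hj
    rw [Finset.mem_range] at hj
    have hjn : j ≤ n := Nat.lt_succ_iff.mp hj
    unfold rchoose
    have hfac : (n.choose j : ℝ) * (j.factorial : ℝ) * ((n-j).factorial : ℝ) = n.factorial := by
      rw [← Nat.cast_mul, ← Nat.cast_mul, Nat.choose_mul_factorial_mul_factorial hjn]
    have hsgn : (-1:ℝ)^j * (-1:ℝ)^(n-j) = (-1:ℝ)^n := by
      rw [← pow_add, Nat.add_sub_cancel' hjn]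
    field_simp
    linear_combination poch (-a) j * poch (-b) (n-j) * ((n.factorial:ℝ) * hsgn - (-1:ℝ)^n * hfac)
  rw [Finset.sum_congr rfl step, ← Finset.mul_sum, poch_vandermonde (-a) (-b) n]
  unfold rchoose
  rw [neg_add]
  ring

lemma real_beta (a b : ℝ) (ha : 0 < a) (hb : 0 < b) :
    ∫ t in (0:ℝ)..1, t^(a-1) * (1-t)^(b-1) = Real.Gamma a * Real.Gamma b / Real.Gamma (a+b) := by
  have hC := Complex.Gamma_mul_Gamma_eq_betaIntegral (s := (a:ℂ)) (t := (b:ℂ))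
    (by simpa using ha) (by simpa using hb)
  have heq : Complex.betaIntegral (a:ℂ) (b:ℂ)
      = ((∫ t in (0:ℝ)..1, t^(a-1) * (1-t)^(b-1) : ℝ) : ℂ) := by
    rw [Complex.betaIntegral, ← intervalIntegral.integral_ofReal]
    apply intervalIntegral.integral_congr
    intro x hx
    rw [Set.uIcc_of_le (by norm_num : (0:ℝ) ≤ 1)] at hx
    dsimp only
    rw [show ((a:ℂ)-1) = ((a-1:ℝ):ℂ) by push_cast; ring,
      show ((b:ℂ)-1) = ((b-1:ℝ):ℂ) by push_cast; ring,
      show ((1:ℂ)-(x:ℂ)) = ((1-x:ℝ):ℂ) by push_cast; ring,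
      ← Complex.ofReal_cpow hx.1, ← Complex.ofReal_cpow (by linarith [hx.2] : (0:ℝ) ≤ 1 - x)]
    push_cast
    ring
  rw [heq] at hC
  have hΓ : ∀ x : ℝ, Complex.Gamma (x:ℂ) = (Real.Gamma x : ℂ) := fun x => Complex.Gamma_ofReal x
  rw [hΓ a, hΓ b, show ((a:ℂ) + b) = ((a+b:ℝ):ℂ) by push_cast; ring, hΓ (a+b)] at hC
  have hne : Real.Gamma (a+b) ≠ 0 := (Real.Gamma_pos_of_pos (by linarith)).ne'
  rw [eq_div_iff hne]
  rw [← Complex.ofReal_mul, ← Complex.ofReal_mul] at hC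
  rw [mul_comm]
  symm
  exact_mod_cast hC

lemma beta_integrableOn (a b : ℝ) (ha : 0 < a) (hb : 0 < b) :
    IntegrableOn (fun t => t^(a-1) * (1-t)^(b-1)) (Set.Ioo (0:ℝ) 1) := by
  have h := Complex.betaIntegral_convergent (u := (a:ℂ)) (v := (b:ℂ))
    (by simpa using ha) (by simpa using hb)
  have h2 : IntegrableOn (fun x : ℝ => (x:ℂ)^((a:ℂ)-1) * (1-(x:ℂ))^((b:ℂ)-1))
      (Set.Ioo (0:ℝ) 1) := by
    have := (intervalIntegrable_iff_integrableOn_Ioo_of_le (by norm_num : (0:ℝ) ≤ 1)).mp h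
    exact this
  have h3 := h2.re
  refine (integrableOn_congr_fun ?_ measurableSet_Ioo).mpr h3
  intro x hx
  have h1 : (0:ℝ) ≤ x := hx.1.le
  have h2' : (0:ℝ) ≤ 1 - x := by linarith [hx.2]
  simp only
  rw [show ((a:ℂ)-1) = ((a-1:ℝ):ℂ) by push_cast; ring, show ((b:ℂ)-1) = ((b-1:ℝ):ℂ) by push_cast; ring,
    show ((1:ℂ)-(x:ℂ)) = ((1-x:ℝ):ℂ) by push_cast; ring,
    ← Complex.ofReal_cpow h1, ← Complex.ofReal_cpow h2', ← Complex.ofReal_mul]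
  simp [RCLike.re_to_complex]

lemma map_image : (fun t : ℝ => t / (1 - t)) '' Set.Ioo 0 1 = Set.Ioi (0:ℝ) := by
  ext x
  constructor
  · rintro ⟨t, ⟨ht0, ht1⟩, rfl⟩
    exact Set.mem_Ioi.mpr (div_pos ht0 (by linarith))
  · intro hx
    rw [Set.mem_Ioi] at hx
    refine ⟨x / (1+x), ⟨by positivity, by rw [div_lt_one (by linarith)]; linarith⟩, ?_⟩
    have h1 : (1:ℝ) + x ≠ 0 := by positivity
    field_simp
    ring

lemma map_deriv : ∀ t ∈ Set.Ioo (0:ℝ) 1,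
    HasDerivWithinAt (fun t : ℝ => t / (1 - t)) (((1-t)^2)⁻¹) (Set.Ioo (0:ℝ) 1) t := by
  intro t ht
  have hu : (1:ℝ) - t ≠ 0 := by have := ht.2; intro h; linarith [ht.2, h]
  have := ((hasDerivAt_id t).div ((hasDerivAt_const t (1:ℝ)).sub (hasDerivAt_id t)) hu)
  convert this.hasDerivWithinAt using 1
  · rfl
  · rfl
  · rfl
  · simp only [Pi.sub_apply, id]
    field_simp
    ring

lemma map_inj : Set.InjOn (fun t : ℝ => t / (1 - t)) (Set.Ioo 0 1) := by
  intro s hs t ht h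
  have h1 : (1:ℝ) - s ≠ 0 := by have := hs.2; intro hc; linarith
  have h2 : (1:ℝ) - t ≠ 0 := by have := ht.2; intro hc; linarith
  field_simp at h
  nlinarith [h]

lemma integrand_eqOn (a b : ℝ) : Set.EqOn
    (fun t => |((1-t)^2)⁻¹| * ((t/(1-t))^(a-1) * (1+t/(1-t))^(-(a+b))))
    (fun t => t^(a-1) * (1-t)^(b-1)) (Set.Ioo (0:ℝ) 1) := by
  intro t ht
  obtain ⟨ht0, ht1⟩ := ht
  have hu : (0:ℝ) < 1 - t := by linarith
  dsimp only
  have h1 : 1 + t/(1-t) = (1-t)⁻¹ := by field_simp; ring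
  rw [h1, abs_of_pos (by positivity), Real.inv_rpow hu.le, ← Real.rpow_neg hu.le, neg_neg,
    Real.div_rpow ht0.le hu.le, div_eq_mul_inv, ← Real.rpow_neg hu.le,
    show ((1-t)^2 : ℝ) = (1-t)^((2:ℕ):ℝ) from (Real.rpow_natCast _ 2).symm,
    ← Real.rpow_neg hu.le]
  rw [mul_comm, mul_assoc, mul_assoc, ← Real.rpow_add hu, ← Real.rpow_add hu]
  congr 1
  push_cast
  ring

lemma beta_Ioi (a b : ℝ) (ha : 0 < a) (hb : 0 < b) :
    ∫ x in Set.Ioi (0:ℝ), x^(a-1) * (1+x)^(-(a+b))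
      = Real.Gamma a * Real.Gamma b / Real.Gamma (a+b) := by
  rw [← map_image, integral_image_eq_integral_abs_deriv_smul measurableSet_Ioo map_deriv map_inj]
  simp only [smul_eq_mul]
  rw [setIntegral_congr_fun measurableSet_Ioo (integrand_eqOn a b), ← integral_Ioc_eq_integral_Ioo,
    ← intervalIntegral.integral_of_le (by norm_num : (0:ℝ) ≤ 1)]
  exact real_beta a b ha hb

lemma beta_Ioi_integrableOn (a b : ℝ) (ha : 0 < a) (hb : 0 < b) :
    IntegrableOn (fun x => x^(a-1) * (1+x)^(-(a+b))) (Set.Ioi (0:ℝ)) := by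
  rw [← map_image, integrableOn_image_iff_integrableOn_abs_deriv_smul measurableSet_Ioo
    map_deriv map_inj]
  simp only [smul_eq_mul]
  exact ((integrableOn_congr_fun (integrand_eqOn a b) measurableSet_Ioo).mpr
    (beta_integrableOn a b ha hb))

lemma rchoose_zero (a : ℝ) : rchoose a 0 = 1 := by simp [rchoose, poch_zero]

lemma rchoose_eq_poch_div (a : ℝ) (k : ℕ) :
    rchoose a k = poch (a - k + 1) k / k.factorial := by
  unfold rchoose
  rw [poch_neg, ← mul_assoc, ← mul_pow]
  simp

lemma Gamma_poch {x : ℝ} (hx : 0 < x) (k : ℕ) :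
    Real.Gamma (x + k) = Real.Gamma x * poch x k := by
  induction k with
  | zero => simp [poch_zero]
  | succ k ih =>
    have hxk : x + (k:ℝ) ≠ 0 := by positivity
    rw [show x + ((k+1 : ℕ):ℝ) = (x + k) + 1 by push_cast; ring, Real.Gamma_add_one hxk, ih,
      poch_succ]
    ring

lemma Mfin_expand (p q : ℝ) (n m : ℕ) : Set.EqOn
    (fun x => x^q * (1+x)^((m:ℝ) - (p+q)) * Mfin p q n x)
    (fun x => ∑ j ∈ range (n+1),
      ((-1:ℝ)^n * n.factorial * (rchoose (p-n-1) j * rchoose (q+n) (n-j)) * (-1:ℝ)^j)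
        * (x^((q+j+1)-1) * (1+x)^(-((q+j+1)+(p-m-j-1)))))
    (Set.Ioi (0:ℝ)) := by
  intro x hx
  rw [Set.mem_Ioi] at hx
  dsimp only
  have hterm : ∀ j ∈ range (n+1),
      ((-1:ℝ)^n * n.factorial * (rchoose (p-n-1) j * rchoose (q+n) (n-j)) * (-1:ℝ)^j)
        * (x^((q+j+1)-1) * (1+x)^(-((q+j+1)+(p-m-j-1))))
      = (x^q * (1+x)^((m:ℝ) - (p+q)))
        * ((-1:ℝ)^n * n.factorial * (rchoose (p-n-1) j * rchoose (q+n) (n-j) * (-x)^j)) := by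
    intro j _
    rw [show (q+(j:ℝ)+1)-1 = q + (j:ℝ) by ring, Real.rpow_add hx, Real.rpow_natCast,
      show -((q+(j:ℝ)+1)+(p-(m:ℝ)-(j:ℝ)-1)) = (m:ℝ) - (p+q) by ring, neg_pow]
    ring
  rw [Finset.sum_congr rfl hterm, ← Finset.mul_sum, ← Finset.mul_sum]
  unfold Mfin
  ring

lemma g_integrableOn (p q : ℝ) (n m : ℕ) (hq : q > -1) (hp : (n:ℝ) + m + 1 < p) :
    IntegrableOn (fun x => x^q * (1+x)^((m:ℝ) - (p+q)) * Mfin p q n x) (Set.Ioi (0:ℝ)) := by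
  refine (integrableOn_congr_fun (Mfin_expand p q n m) measurableSet_Ioi).mpr ?_
  apply MeasureTheory.integrable_finset_sum
  intro j hj
  rw [Finset.mem_range] at hj
  have hjn : (j:ℝ) ≤ n := by exact_mod_cast Nat.lt_succ_iff.mp hj
  apply MeasureTheory.Integrable.const_mul
  exact beta_Ioi_integrableOn (q+j+1) (p-m-j-1)
    (by have : (0:ℝ) ≤ j := Nat.cast_nonneg j; linarith)
    (by linarith)

lemma Mfin_integral (p q : ℝ) (n m : ℕ) (hq : q > -1) (hmn : m ≤ n) (hp : (n:ℝ) + m + 1 < p) :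
    ∫ x in Set.Ioi (0:ℝ), x^q * (1+x)^((m:ℝ) - (p+q)) * Mfin p q n x
      = (n.factorial : ℝ) * Real.Gamma (q+n+1) * Real.Gamma (p-m-n-1) / Real.Gamma (p+q-m)
        * rchoose (m:ℝ) n := by
  rw [setIntegral_congr_fun measurableSet_Ioi (Mfin_expand p q n m)]
  rw [MeasureTheory.integral_finset_sum _ (fun j hj => by
    rw [Finset.mem_range] at hj
    have hjn : (j:ℝ) ≤ n := by exact_mod_cast Nat.lt_succ_iff.mp hj
    exact (beta_Ioi_integrableOn (q+j+1) (p-m-j-1)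
      (by have : (0:ℝ) ≤ j := Nat.cast_nonneg j; linarith) (by linarith)).const_mul _)]
  have hval : ∀ j ∈ range (n+1),
      (∫ x in Set.Ioi (0:ℝ), ((-1:ℝ)^n * n.factorial
          * (rchoose (p-n-1) j * rchoose (q+n) (n-j)) * (-1:ℝ)^j)
        * (x^((q+j+1)-1) * (1+x)^(-((q+j+1)+(p-m-j-1)))))
      = ((n.factorial:ℝ) * Real.Gamma (q+n+1) * Real.Gamma (p-m-n-1) / Real.Gamma (p+q-m))
        * (rchoose (p-n-1) j * rchoose ((n:ℝ)+m+1-p) (n-j)) := by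
    intro j hj
    rw [Finset.mem_range] at hj
    have hjn : j ≤ n := Nat.lt_succ_iff.mp hj
    have hjnR : (j:ℝ) ≤ n := by exact_mod_cast hjn
    have hq1 : (0:ℝ) < q + j + 1 := by have : (0:ℝ) ≤ j := Nat.cast_nonneg j; linarith
    have hpm : (0:ℝ) < p - m - j - 1 := by linarith
    have hpmn : (0:ℝ) < p - m - n - 1 := by linarith
    rw [MeasureTheory.integral_const_mul, beta_Ioi (q+j+1) (p-m-j-1) hq1 hpm,
      show (q+(j:ℝ)+1)+(p-(m:ℝ)-(j:ℝ)-1) = p+q-m by ring]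
    have hcast : ((n-j:ℕ):ℝ) = (n:ℝ) - j := by rw [Nat.cast_sub hjn]
    have e1 : rchoose (q+(n:ℝ)) (n-j) = poch (q+j+1) (n-j) / ((n-j).factorial) := by
      rw [rchoose_eq_poch_div, show q+(n:ℝ) - ((n-j:ℕ):ℝ) + 1 = q+(j:ℝ)+1 by rw [hcast]; ring]
    have e2 : Real.Gamma (q+(n:ℝ)+1) = Real.Gamma (q+j+1) * poch (q+j+1) (n-j) := by
      rw [← Gamma_poch hq1 (n-j),
        show q+(j:ℝ)+1+((n-j:ℕ):ℝ) = q+(n:ℝ)+1 by rw [hcast]; ring]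
    have e3 : Real.Gamma (p-(m:ℝ)-j-1) = Real.Gamma (p-m-n-1) * poch (p-m-n-1) (n-j) := by
      rw [← Gamma_poch hpmn (n-j),
        show p-(m:ℝ)-(n:ℝ)-1+((n-j:ℕ):ℝ) = p-(m:ℝ)-(j:ℝ)-1 by rw [hcast]; ring]
    have e4 : rchoose ((n:ℝ)+m+1-p) (n-j)
        = (-1:ℝ)^(n-j) * poch (p-(m:ℝ)-n-1) (n-j) / ((n-j).factorial) := by
      unfold rchoose
      rw [show -((n:ℝ)+(m:ℝ)+1-p) = p-(m:ℝ)-(n:ℝ)-1 by ring]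
    have e7 : (-1:ℝ)^(n-j) = (-1:ℝ)^n * (-1:ℝ)^j := by
      have h := pow_add (-1:ℝ) (n-j) j
      rw [Nat.sub_add_cancel hjn] at h
      rw [h, mul_assoc, ← mul_pow]
      norm_num
    have hD : Real.Gamma (p+q-m) ≠ 0 := (Real.Gamma_pos_of_pos (by linarith)).ne'
    have hF : ((n-j).factorial : ℝ) ≠ 0 := Nat.cast_ne_zero.mpr (Nat.factorial_ne_zero _)
    rw [e1, e2, e3, e4, e7]
    field_simp
  rw [Finset.sum_congr rfl hval, ← Finset.mul_sum, rchoose_vandermonde,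
    show (p-(n:ℝ)-1) + ((n:ℝ)+m+1-p) = (m:ℝ) by ring]

lemma expand2 (p q : ℝ) (n r : ℕ) : Set.EqOn
    (fun x => x^q * (1+x)^(-(p+q)) * Mfin p q r x * Mfin p q n x)
    (fun x => ∑ j ∈ range (r+1), ∑ k ∈ range (j+1),
       ((-1:ℝ)^r * r.factorial * (rchoose (p-r-1) j * rchoose (q+r) (r-j)) * (-1:ℝ)^j
         * (j.choose k) * (-1:ℝ)^(j-k))
       * (x^q * (1+x)^((k:ℝ)-(p+q)) * Mfin p q n x)) (Set.Ioi 0) := by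
  intro x hx
  rw [Set.mem_Ioi] at hx
  have h1x : (0:ℝ) < 1 + x := by linarith
  dsimp only
  have hsplit : ∀ k : ℕ, (1+x)^((k:ℝ)-(p+q)) = (1+x)^(k:ℕ) * (1+x)^(-(p+q)) := by
    intro k
    rw [show (k:ℝ)-(p+q) = (k:ℝ) + (-(p+q)) by ring, Real.rpow_add h1x, Real.rpow_natCast]
  have hinner : ∀ j ∈ range (r+1),
      ∑ k ∈ range (j+1), ((-1:ℝ)^r * r.factorial
          * (rchoose (p-r-1) j * rchoose (q+r) (r-j)) * (-1:ℝ)^j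
          * (j.choose k) * (-1:ℝ)^(j-k))
        * (x^q * (1+x)^((k:ℝ)-(p+q)) * Mfin p q n x)
      = ((-1:ℝ)^r * r.factorial * (rchoose (p-r-1) j * rchoose (q+r) (r-j)))
        * ((-x)^j * (x^q * (1+x)^(-(p+q)) * Mfin p q n x)) := by
    intro j _
    have hxj : ∑ k ∈ range (j+1), ((1+x):ℝ)^k * (-1:ℝ)^(j-k) * (j.choose k) = x^j := by
      have h := add_pow (1+x) (-1:ℝ) j
      rw [show (1+x) + (-1:ℝ) = x by ring] at h
      rw [← h]
    calc ∑ k ∈ range (j+1), ((-1:ℝ)^r * r.factorial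
          * (rchoose (p-r-1) j * rchoose (q+r) (r-j)) * (-1:ℝ)^j
          * (j.choose k) * (-1:ℝ)^(j-k))
        * (x^q * (1+x)^((k:ℝ)-(p+q)) * Mfin p q n x)
        = ∑ k ∈ range (j+1), ((-1:ℝ)^r * r.factorial
            * (rchoose (p-r-1) j * rchoose (q+r) (r-j)) * (-1:ℝ)^j
            * (x^q * (1+x)^(-(p+q)) * Mfin p q n x))
          * (((1+x):ℝ)^k * (-1:ℝ)^(j-k) * (j.choose k)) := by
          apply Finset.sum_congr rfl
          intro k _
          rw [hsplit k]
          ring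
      _ = ((-1:ℝ)^r * r.factorial * (rchoose (p-r-1) j * rchoose (q+r) (r-j)) * (-1:ℝ)^j
            * (x^q * (1+x)^(-(p+q)) * Mfin p q n x)) * x^j := by
          rw [← Finset.mul_sum, hxj]
      _ = ((-1:ℝ)^r * r.factorial * (rchoose (p-r-1) j * rchoose (q+r) (r-j)))
            * ((-x)^j * (x^q * (1+x)^(-(p+q)) * Mfin p q n x)) := by
          rw [neg_pow]
          ring
  rw [Finset.sum_congr rfl hinner]
  have h2 : ∀ j ∈ range (r+1),
      ((-1:ℝ)^r * r.factorial * (rchoose (p-r-1) j * rchoose (q+r) (r-j)))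
        * ((-x)^j * (x^q * (1+x)^(-(p+q)) * Mfin p q n x))
      = (x^q * (1+x)^(-(p+q)) * Mfin p q n x * ((-1:ℝ)^r * r.factorial))
        * (rchoose (p-r-1) j * rchoose (q+r) (r-j) * (-x)^j) := fun j _ => by ring
  rw [Finset.sum_congr rfl h2, ← Finset.mul_sum]
  unfold Mfin
  ring

theorem ortho_le (p q : ℝ) (n r : ℕ) (hq : q > -1) (hrn : r ≤ n) (hp : p > 2 * (n:ℝ) + 1) :
    ∫ x in Set.Ioi (0:ℝ), x ^ q * (1 + x) ^ (-(p + q)) * Mfin p q r x * Mfin p q n x =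
      if r = n then
        (n.factorial : ℝ) * Real.Gamma (p - n) * Real.Gamma (q + n + 1) /
          ((p - 2 * n - 1) * Real.Gamma (p + q - n))
      else 0 := by
  have hrnR : (r:ℝ) ≤ n := by exact_mod_cast hrn
  have hkle : ∀ {j k : ℕ}, j ∈ range (r+1) → k ∈ range (j+1) → (n:ℝ) + k + 1 < p := by
    intro j k hj hk
    rw [Finset.mem_range] at hj hk
    have hkn : k ≤ n := le_trans (Nat.lt_succ_iff.mp hk) (le_trans (Nat.lt_succ_iff.mp hj) hrn)
    have : (k:ℝ) ≤ n := by exact_mod_cast hkn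
    linarith
  have hkn' : ∀ {j k : ℕ}, j ∈ range (r+1) → k ∈ range (j+1) → k ≤ n := by
    intro j k hj hk
    rw [Finset.mem_range] at hj hk
    exact le_trans (Nat.lt_succ_iff.mp hk) (le_trans (Nat.lt_succ_iff.mp hj) hrn)
  rw [setIntegral_congr_fun measurableSet_Ioi (expand2 p q n r)]
  rw [MeasureTheory.integral_finset_sum _ (fun j hj => MeasureTheory.integrable_finset_sum _
    (fun k hk => (g_integrableOn p q n k hq (hkle hj hk)).const_mul _))]
  have hval : ∀ j ∈ range (r+1),
      (∫ x in Set.Ioi (0:ℝ), ∑ k ∈ range (j+1),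
        ((-1:ℝ)^r * r.factorial * (rchoose (p-r-1) j * rchoose (q+r) (r-j)) * (-1:ℝ)^j
          * (j.choose k) * (-1:ℝ)^(j-k))
        * (x^q * (1+x)^((k:ℝ)-(p+q)) * Mfin p q n x))
      = ∑ k ∈ range (j+1),
        ((-1:ℝ)^r * r.factorial * (rchoose (p-r-1) j * rchoose (q+r) (r-j)) * (-1:ℝ)^j
          * (j.choose k) * (-1:ℝ)^(j-k))
        * ((n.factorial:ℝ) * Real.Gamma (q+n+1) * Real.Gamma (p-k-n-1) / Real.Gamma (p+q-k)
            * rchoose (k:ℝ) n) := by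
    intro j hj
    rw [MeasureTheory.integral_finset_sum _
      (fun k hk => (g_integrableOn p q n k hq (hkle hj hk)).const_mul _)]
    apply Finset.sum_congr rfl
    intro k hk
    rw [MeasureTheory.integral_const_mul, Mfin_integral p q n k hq (hkn' hj hk) (hkle hj hk)]
  rw [Finset.sum_congr rfl hval]
  by_cases hr : r = n
  · subst hr
    rw [if_pos rfl]
    rw [Finset.sum_eq_single_of_mem r (Finset.self_mem_range_succ r) (by
      intro j hj hjne
      apply Finset.sum_eq_zero
      intro k hk
      rw [Finset.mem_range] at hj hk
      have : k < r := lt_of_le_of_lt (Nat.lt_succ_iff.mp hk)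
        (lt_of_le_of_ne (Nat.lt_succ_iff.mp hj) hjne)
      rw [rchoose_nat_lt this]
      ring)]
    rw [Finset.sum_eq_single_of_mem r (Finset.self_mem_range_succ r) (by
      intro k hk hkne
      rw [Finset.mem_range] at hk
      have : k < r := lt_of_le_of_ne (Nat.lt_succ_iff.mp hk) hkne
      rw [rchoose_nat_lt this]
      ring)]
    simp only [Nat.sub_self, pow_zero, Nat.choose_self, Nat.cast_one, mul_one,
      rchoose_zero, rchoose_nat_self]
    have hpr : (0:ℝ) < p - 2*r - 1 := by linarith
    have hΓ : Real.Gamma (p - r) = Real.Gamma (p - 2*r - 1)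
        * ((p - 2*r - 1) * poch (p - 2*r - 1 + 1) r) := by
      rw [← poch_succ', ← Gamma_poch hpr (r+1),
        show p - 2*(r:ℝ) - 1 + ((r+1:ℕ):ℝ) = p - r by push_cast; ring]
    have hD : Real.Gamma (p + q - r) ≠ 0 := by
      refine (Real.Gamma_pos_of_pos ?_).ne'
      linarith
    have hfr : ((r.factorial : ℝ)) ≠ 0 := Nat.cast_ne_zero.mpr (Nat.factorial_ne_zero _)
    have hsq' : (-1:ℝ)^(r*2) = 1 := by rw [mul_comm, pow_mul]; norm_num
    have step1 : ((-1:ℝ)^r * r.factorial * rchoose (p - (r:ℝ) - 1) r * (-1:ℝ)^r)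
        * ((r.factorial:ℝ) * Real.Gamma (q+(r:ℝ)+1) * Real.Gamma (p-(r:ℝ)-(r:ℝ)-1)
            / Real.Gamma (p+q-(r:ℝ)))
        = ((r.factorial:ℝ) * rchoose (p-(r:ℝ)-1) r)
          * ((r.factorial:ℝ) * Real.Gamma (q+(r:ℝ)+1) * Real.Gamma (p-(r:ℝ)-(r:ℝ)-1)
            / Real.Gamma (p+q-(r:ℝ))) := by
      linear_combination ((r.factorial:ℝ) * rchoose (p-(r:ℝ)-1) r
        * ((r.factorial:ℝ) * Real.Gamma (q+(r:ℝ)+1) * Real.Gamma (p-(r:ℝ)-(r:ℝ)-1)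
          / Real.Gamma (p+q-(r:ℝ)))) * hsq'
    rw [step1, rchoose_eq_poch_div (p - r - 1) r,
      show p - (r:ℝ) - 1 - r + 1 = p - 2*r - 1 + 1 by ring,
      show p - (r:ℝ) - r - 1 = p - 2*r - 1 by ring, hΓ]
    field_simp
  · rw [if_neg hr]
    have hrn2 : r < n := lt_of_le_of_ne hrn hr
    apply Finset.sum_eq_zero
    intro j hj
    apply Finset.sum_eq_zero
    intro k hk
    have : k < n := lt_of_le_of_lt (by rw [Finset.mem_range] at hk; omega : k ≤ j)
      (lt_of_le_of_lt (by rw [Finset.mem_range] at hj; omega : j ≤ r) hrn2)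
    rw [rchoose_nat_lt this]
    ring

theorem finite_orthogonality_Mfin (p q : ℝ) (n r : ℕ) (hq : q > -1)
    (hp : p > 2 * (max n r : ℝ) + 1) :
    ∫ x in Set.Ioi (0 : ℝ), x ^ q * (1 + x) ^ (-(p + q)) * Mfin p q r x * Mfin p q n x =
      if r = n then
        (n.factorial : ℝ) * Real.Gamma (p - n) * Real.Gamma (q + n + 1) /
          ((p - 2 * n - 1) * Real.Gamma (p + q - n))
      else 0 := by
  rcases le_or_gt r n with h | h
  · have hmax : (max (n:ℝ) (r:ℝ)) = (n:ℝ) := max_eq_left (by exact_mod_cast h)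
    rw [hmax] at hp
    exact ortho_le p q n r hq h hp
  · have hn : n ≤ r := h.le
    have hne : r ≠ n := ne_of_gt h
    have hmax : (max (n:ℝ) (r:ℝ)) = (r:ℝ) := max_eq_right (by exact_mod_cast hn)
    rw [hmax] at hp
    rw [if_neg hne]
    have h2 := ortho_le p q r n hq hn hp
    rw [if_neg (ne_of_lt h)] at h2
    refine Eq.trans ?_ h2
    apply setIntegral_congr_fun measurableSet_Ioi
    intro x _
    ring
end

section
/- For each fixed x, q > -1, and positive integer υ, lim_{p→∞} M_n(p, q, υ; x/p) = (-1)^n n! Z_n^{(q)}(x; υ), where Z_n^{(q)}(x;υ) = [Γ(υn+q+1)/n!] Σ_{j=0}^n (-1)^j C(n,j) x^{υj} / Γ(υj+q+1) is the first Konhauser polynomial. -/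
open Finset MeasureTheory Real Filter

/-- The first Konhauser polynomial. -/
noncomputable def Zkon (g : ℝ) (υ n : ℕ) (x : ℝ) : ℝ :=
  Real.Gamma (υ * n + g + 1) / n.factorial *
    ∑ j ∈ Finset.range (n + 1),
      (-1 : ℝ) ^ j * (n.choose j : ℝ) * x ^ (υ * j) / Real.Gamma (υ * j + g + 1)

lemma gamma_poch {a : ℝ} (ha : 0 < a) (k : ℕ) :
    Real.Gamma (a + k) = poch a k * Real.Gamma a := by
  induction k with
  | zero => simp [poch]
  | succ k ih =>
    have h1 : a + (k+1 : ℕ) = (a + k) + 1 := by push_cast; ring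
    rw [h1, Real.Gamma_add_one (by positivity), ih]
    rw [show poch a (k+1) = poch a k * (a + k) from Finset.prod_range_succ _ _]
    ring

lemma factor_tendsto (c x : ℝ) :
    Tendsto (fun p : ℝ => (c - p) * (-(x / p))) atTop (nhds x) := by
  have h : Tendsto (fun p : ℝ => (1 - c / p) * x) atTop (nhds x) := by
    have := ((tendsto_const_nhds (x := (1:ℝ))).sub (tendsto_const_nhds.div_atTop
      (f := fun _ : ℝ => c) tendsto_id)).mul (tendsto_const_nhds (x := x))
    simpa using this
  refine h.congr' ?_
  filter_upwards [eventually_gt_atTop (0:ℝ)] with p hp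
  field_simp
  ring

lemma prod_tendsto (b x : ℝ) (m : ℕ) :
    Tendsto (fun p : ℝ => poch (b - p) m * (-(x / p)) ^ m) atTop (nhds (x ^ m)) := by
  have heq : ∀ p : ℝ, poch (b - p) m * (-(x / p)) ^ m
      = ∏ i ∈ Finset.range m, ((b + i - p) * (-(x / p))) := by
    intro p
    rw [Finset.prod_mul_distrib, Finset.prod_const, Finset.card_range, poch]
    congr 1
    exact Finset.prod_congr rfl fun i _ => by ring
  simp only [heq]
  have : (x : ℝ) ^ m = ∏ _i ∈ Finset.range m, x := by
    rw [Finset.prod_const, Finset.card_range]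
  rw [this]
  exact tendsto_finset_prod _ fun i _ => factor_tendsto (b + i) x

theorem Mbio_tendsto_Konhauser (q x : ℝ) (υ n : ℕ) (hq : q > -1) (hυ : 0 < υ) :
    Filter.Tendsto (fun p : ℝ => Mbio p q υ n (x / p)) Filter.atTop
      (nhds ((-1 : ℝ) ^ n * n.factorial * Zkon q υ n x)) := by
  have hq1 : (0:ℝ) < q + 1 := by linarith
  set L : ℕ → ℝ := fun j =>
    (-1:ℝ)^j * (n.choose j : ℝ) / poch (q+1) (υ*j) * x ^ (υ*j) with hL
  have hterm : ∀ j ∈ Finset.range (n+1),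
      Tendsto (fun p : ℝ => (-1:ℝ)^j * (n.choose j : ℝ) *
        (poch (n + 1 - p) (υ*j) / poch (q+1) (υ*j)) * (-(x/p)) ^ (υ*j))
        atTop (nhds (L j)) := by
    intro j _
    have h := (prod_tendsto (n+1) x (υ*j)).const_mul
      ((-1:ℝ)^j * (n.choose j : ℝ) / poch (q+1) (υ*j))
    refine h.congr fun p => ?_
    ring
  have main : Tendsto (fun p : ℝ => Mbio p q υ n (x/p)) atTop
      (nhds ((-1:ℝ)^n * poch (q+1) (υ*n) * ∑ j ∈ Finset.range (n+1), L j)) := by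
    simp only [Mbio]
    exact (tendsto_finset_sum _ hterm).const_mul _
  have hΓne : Real.Gamma (q+1) ≠ 0 := (Real.Gamma_pos_of_pos hq1).ne'
  have hfac : (n.factorial : ℝ) ≠ 0 := Nat.cast_ne_zero.mpr n.factorial_ne_zero
  have hg : ∀ k : ℕ, Real.Gamma ((υ:ℝ) * k + q + 1)
      = poch (q+1) (υ*k) * Real.Gamma (q+1) := by
    intro k
    rw [show (υ:ℝ) * k + q + 1 = (q+1) + (↑(υ*k) : ℝ) by push_cast; ring]
    exact gamma_poch hq1 _
  have hZ : (-1:ℝ)^n * n.factorial * Zkon q υ n x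
      = (-1:ℝ)^n * poch (q+1) (υ*n) * ∑ j ∈ Finset.range (n+1), L j := by
    conv_rhs => rw [Finset.mul_sum]
    simp only [Zkon, hg, Finset.mul_sum]
    apply Finset.sum_congr rfl
    intro j _
    have hpj : poch (q+1) (υ*j) ≠ 0 := (poch_pos hq1 _).ne'
    rw [hL]
    field_simp
  rw [hZ]
  exact main
end

section
/- The polynomials M_n(p,q,υ;x) and the biorthogonal Jacobi-type polynomials J_n(p,q,υ;x) = [(1+p)_{υn}/n!] Σ_{j=0}^n (-1)^j C(n,j) [(1+p+q+n)_{υj}/(1+p)_{υj}] ((1-x)/2)^{υj} are connected by M_n(p,q,υ;x) = (-1)^n n! J_n(q, -p-q, υ; 2x+1). -/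
open Finset MeasureTheory Real Filter

/-- The biorthogonal polynomials suggested by the Jacobi polynomials, first set. -/
noncomputable def Jbio (p q : ℝ) (υ n : ℕ) (x : ℝ) : ℝ :=
  poch (1 + p) (υ * n) / n.factorial *
    ∑ j ∈ Finset.range (n + 1), (-1 : ℝ) ^ j * (n.choose j : ℝ) *
      (poch (1 + p + q + n) (υ * j) / poch (1 + p) (υ * j)) * ((1 - x) / 2) ^ (υ * j)

theorem Mbio_eq_Jbio (p q : ℝ) (υ n : ℕ) (hυ : 0 < υ) (x : ℝ) :
    Mbio p q υ n x = (-1 : ℝ) ^ n * n.factorial * Jbio q (-p - q) υ n (2 * x + 1) := by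
  unfold Mbio Jbio
  have h1 : (1 - (2 * x + 1)) / 2 = -x := by ring
  have h2 : 1 + q + (-p - q) + (n : ℝ) = (n : ℝ) + 1 - p := by ring
  have h3 : (1 : ℝ) + q = q + 1 := by ring
  rw [h1, h2, h3]
  have hn : (n.factorial : ℝ) ≠ 0 := by positivity
  field_simp
end

section
/- For q > -1, μ > 0, υ a positive integer, and x > a, the Riemann–Liouville fractional integral of order μ satisfies (1/Γ(μ)) ∫_a^x (x−t)^{μ−1} (t−a)^q M_n(p,q,υ; w(t−a)) dt = [(x−a)^{q+μ} Γ(υn+q+1) / Γ(υn+q+μ+1)] M_n(p, q+μ, υ; w(x−a)). -/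
open Finset MeasureTheory Real Filter

lemma Gamma_add_nat {s : ℝ} (hs : 0 < s) (k : ℕ) :
    Real.Gamma (s + k) = Real.Gamma s * poch s k := by
  induction k with
  | zero => simp [poch]
  | succ k ih =>
    have h1 : s + (k + 1 : ℕ) = (s + k) + 1 := by push_cast; ring
    rw [h1, Real.Gamma_add_one (by positivity), ih]; unfold poch; rw [Finset.prod_range_succ]
    ring

-- Real beta integral value
lemma beta_rval {b c : ℝ} (hb : 0 < b) (hc : -1 < c) :
    ∫ s in (0:ℝ)..1, s ^ c * (1 - s) ^ (b - 1) =
      Real.Gamma (c + 1) * Real.Gamma b / Real.Gamma (c + 1 + b) := by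
  have hco : ((∫ s in (0:ℝ)..1, s ^ c * (1 - s) ^ (b - 1) : ℝ) : ℂ) =
      Complex.betaIntegral ((c : ℂ) + 1) (b : ℂ) := by
    rw [← intervalIntegral.integral_ofReal, Complex.betaIntegral]
    apply intervalIntegral.integral_congr
    intro t ht
    rw [Set.uIcc_of_le (by norm_num : (0:ℝ) ≤ 1)] at ht
    obtain ⟨h0, h1⟩ := ht
    push_cast
    rw [Complex.ofReal_cpow h0, Complex.ofReal_cpow (by linarith : (0:ℝ) ≤ 1 - t)]
    push_cast
    ring_nf
  have hG := Complex.Gamma_mul_Gamma_eq_betaIntegral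
    (s := (c : ℂ) + 1) (t := (b : ℂ))
    (by simp; linarith) (by simpa using hb)
  rw [← hco] at hG
  have hne : Real.Gamma (c + 1 + b) ≠ 0 := (Real.Gamma_pos_of_pos (by linarith)).ne'
  have : ((Real.Gamma (c+1) * Real.Gamma b : ℝ) : ℂ) =
      ((Real.Gamma (c+1+b) : ℝ) : ℂ) * ((∫ s in (0:ℝ)..1, s ^ c * (1 - s) ^ (b - 1) : ℝ) : ℂ) := by
    push_cast
    rw [← Complex.Gamma_ofReal, ← Complex.Gamma_ofReal, ← Complex.Gamma_ofReal]
    push_cast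
    rw [hG]
  rw [← Complex.ofReal_mul] at this
  have h2 := Complex.ofReal_injective this
  field_simp
  linarith [h2]

lemma intInt_aux {μ c a x : ℝ} (hμ : 0 < μ) (hc : -1 < c) (hx : a < x) :
    IntervalIntegrable (fun t => (x - t) ^ (μ - 1) * (t - a) ^ c) volume a x := by
  set m := (a + x) / 2 with hm
  have ham : a < m := by simp [hm]; linarith
  have hmx : m < x := by simp [hm]; linarith
  have h1 : IntervalIntegrable (fun t => (x - t) ^ (μ - 1) * (t - a) ^ c) volume a m := by
    have hi : IntervalIntegrable (fun t : ℝ => (t - a) ^ c) volume a m := by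
      have := (intervalIntegral.intervalIntegrable_rpow' (a := 0) (b := m - a) hc).comp_sub_right a
      simpa using this
    apply hi.continuousOn_mul
    apply ContinuousOn.rpow_const
    · exact (continuous_const.sub continuous_id).continuousOn
    · intro t ht
      rw [Set.uIcc_of_le ham.le] at ht
      left
      have := ht.2
      intro h
      nlinarith [hmx]
  have h2 : IntervalIntegrable (fun t => (x - t) ^ (μ - 1) * (t - a) ^ c) volume m x := by
    have hi : IntervalIntegrable (fun t : ℝ => (x - t) ^ (μ - 1)) volume m x := by
      have := (intervalIntegral.intervalIntegrable_rpow' (a := x - m) (b := 0)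
        (by linarith : (-1:ℝ) < μ - 1)).comp_sub_left x
      simpa using this
    apply hi.mul_continuousOn
    apply ContinuousOn.rpow_const
    · exact (continuous_id.sub continuous_const).continuousOn
    · intro t ht
      rw [Set.uIcc_of_le hmx.le] at ht
      left
      have := ht.1
      intro h
      nlinarith [ham]
  exact h1.trans h2

lemma integral_val {μ c a x : ℝ} (hμ : 0 < μ) (hc : -1 < c) (hx : a < x) :
    ∫ t in a..x, (x - t) ^ (μ - 1) * (t - a) ^ c =
      (x - a) ^ (μ + c) * (Real.Gamma (c + 1) * Real.Gamma μ / Real.Gamma (c + 1 + μ)) := by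
  have hk : (0:ℝ) < x - a := by linarith
  have hsub := intervalIntegral.integral_comp_mul_add
    (f := fun t => (x - t) ^ (μ - 1) * (t - a) ^ c) (a := (0:ℝ)) (b := 1)
    (c := x - a) (hc := hk.ne') a
  simp only [mul_zero, zero_add, mul_one] at hsub
  rw [show x - a + a = x by ring] at hsub
  have key : ∫ t in a..x, (x - t) ^ (μ - 1) * (t - a) ^ c =
      (x - a) * ∫ s in (0:ℝ)..1, (x - ((x - a) * s + a)) ^ (μ - 1) * ((x - a) * s + a - a) ^ c := by
    rw [hsub, smul_eq_mul, ← mul_assoc, mul_inv_cancel₀ hk.ne', one_mul]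
  rw [key]
  have hcongr : ∫ s in (0:ℝ)..1, (x - ((x - a) * s + a)) ^ (μ - 1) * ((x - a) * s + a - a) ^ c =
      ∫ s in (0:ℝ)..1, ((x - a) ^ (μ - 1) * (x - a) ^ c) * (s ^ c * (1 - s) ^ (μ - 1)) := by
    apply intervalIntegral.integral_congr
    intro s hs
    rw [Set.uIcc_of_le (by norm_num : (0:ℝ) ≤ 1)] at hs
    obtain ⟨h0, h1⟩ := hs
    simp only []
    rw [show x - ((x - a) * s + a) = (x - a) * (1 - s) by ring,
      show (x - a) * s + a - a = (x - a) * s by ring, Real.mul_rpow hk.le (by linarith), Real.mul_rpow hk.le h0]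
    ring
  rw [hcongr, intervalIntegral.integral_const_mul, beta_rval hμ hc]
  rw [show μ + c = 1 + (μ - 1) + c by ring, Real.rpow_add hk, Real.rpow_add hk,
    Real.rpow_one]
  ring

lemma rpow_nat_split {q s : ℝ} (hq : -1 < q) (hs : 0 ≤ s) (m : ℕ) :
    s ^ (q + (m : ℝ)) = s ^ q * s ^ m := by
  rcases hs.eq_or_lt with h | h
  · rcases Nat.eq_zero_or_pos m with hm | hm
    · simp [hm]
    · have hm1 : (1:ℝ) ≤ m := by exact_mod_cast hm
      rw [← h, Real.zero_rpow (by linarith : q + (m:ℝ) ≠ 0), zero_pow hm.ne', mul_zero]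
  · rw [Real.rpow_add h, Real.rpow_natCast]

lemma coeff_key {q μ : ℝ} (hq : -1 < q) (hμ : 0 < μ) (N m : ℕ) :
    poch (q + 1) N / poch (q + 1) m * (Real.Gamma (q + m + 1) / Real.Gamma (q + m + 1 + μ)) =
    Real.Gamma (N + q + 1) / Real.Gamma (N + q + μ + 1) *
      (poch (q + μ + 1) N / poch (q + μ + 1) m) := by
  have hq1 : (0:ℝ) < q + 1 := by linarith
  have hqm1 : (0:ℝ) < q + μ + 1 := by linarith
  have h1 : Real.Gamma (q + m + 1) = Real.Gamma (q + 1) * poch (q + 1) m := by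
    rw [show q + (m:ℝ) + 1 = (q + 1) + m by ring, Gamma_add_nat hq1 m]
  have h2 : Real.Gamma (q + m + 1 + μ) = Real.Gamma (q + μ + 1) * poch (q + μ + 1) m := by
    rw [show q + (m:ℝ) + 1 + μ = (q + μ + 1) + m by ring, Gamma_add_nat hqm1 m]
  have h3 : Real.Gamma (N + q + 1) = Real.Gamma (q + 1) * poch (q + 1) N := by
    rw [show (N:ℝ) + q + 1 = (q + 1) + N by ring, Gamma_add_nat hq1 N]
  have h4 : Real.Gamma (N + q + μ + 1) = Real.Gamma (q + μ + 1) * poch (q + μ + 1) N := by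
    rw [show (N:ℝ) + q + μ + 1 = (q + μ + 1) + N by ring, Gamma_add_nat hqm1 N]
  rw [h1, h2, h3, h4]
  have p1 := (poch_pos hq1 m).ne'
  have p2 := (poch_pos hq1 N).ne'
  have p3 := (poch_pos hqm1 m).ne'
  have p4 := (poch_pos hqm1 N).ne'
  have g1 := (Real.Gamma_pos_of_pos hq1).ne'
  have g2 := (Real.Gamma_pos_of_pos hqm1).ne'
  field_simp

theorem fractional_integral_Mbio (p q w a x μ : ℝ) (υ n : ℕ) (hq : q > -1) (hμ : 0 < μ)
    (hυ : 0 < υ) (hx : a < x) :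
    (1 / Real.Gamma μ) *
        ∫ t in a..x, (x - t) ^ (μ - 1) * (t - a) ^ q * Mbio p q υ n (w * (t - a)) =
      (x - a) ^ (q + μ) * Real.Gamma (υ * n + q + 1) / Real.Gamma (υ * n + q + μ + 1) *
        Mbio p (q + μ) υ n (w * (x - a)) := by
  have hk : (0:ℝ) < x - a := by linarith
  have hΓμ : Real.Gamma μ ≠ 0 := (Real.Gamma_pos_of_pos hμ).ne'
  set c : ℕ → ℝ := fun j => (-1:ℝ) ^ n * poch (q + 1) (υ * n) *
      ((-1:ℝ) ^ j * (n.choose j : ℝ) * (poch (n + 1 - p) (υ * j) / poch (q + 1) (υ * j))) *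
      (-w) ^ (υ * j) with hcdef
  have hcm : ∀ j : ℕ, -1 < q + ((υ * j : ℕ) : ℝ) := by
    intro j
    have : (0:ℝ) ≤ ((υ * j : ℕ) : ℝ) := Nat.cast_nonneg _
    linarith
  have hstep1 : (∫ t in a..x, (x - t) ^ (μ - 1) * (t - a) ^ q * Mbio p q υ n (w * (t - a)))
      = ∑ j ∈ Finset.range (n + 1),
          c j * ∫ t in a..x, (x - t) ^ (μ - 1) * (t - a) ^ (q + ((υ * j : ℕ) : ℝ)) := by
    rw [intervalIntegral.integral_congr (g := fun t => ∑ j ∈ Finset.range (n + 1),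
        c j * ((x - t) ^ (μ - 1) * (t - a) ^ (q + ((υ * j : ℕ) : ℝ)))) ?_]
    · rw [intervalIntegral.integral_finset_sum]
      · exact Finset.sum_congr rfl fun j _ => intervalIntegral.integral_const_mul _ _
      · intro j _
        exact (intInt_aux hμ (hcm j) hx).const_mul _
    · intro t ht
      rw [Set.uIcc_of_le hx.le] at ht
      simp only [Mbio]
      rw [mul_comm ((-1:ℝ) ^ n * poch (q + 1) (υ * n)), Finset.sum_mul, Finset.mul_sum]
      refine Finset.sum_congr rfl fun j _ => ?_
      rw [show -(w * (t - a)) = (-w) * (t - a) by ring, mul_pow,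
        rpow_nat_split hq (by linarith [ht.1] : (0:ℝ) ≤ t - a) (υ * j)]
      ring
  rw [hstep1]
  have hval : ∀ j : ℕ, (∫ t in a..x, (x - t) ^ (μ - 1) * (t - a) ^ (q + ((υ * j : ℕ) : ℝ)))
      = (x - a) ^ (q + μ) * (x - a) ^ (υ * j) *
        (Real.Gamma (q + (υ * j : ℕ) + 1) * Real.Gamma μ /
          Real.Gamma (q + (υ * j : ℕ) + 1 + μ)) := by
    intro j
    rw [integral_val hμ (hcm j) hx,
      show μ + (q + ((υ * j : ℕ) : ℝ)) = (q + μ) + ((υ * j : ℕ) : ℝ) by ring,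
      Real.rpow_add hk, Real.rpow_natCast]
  simp only [hval]
  rw [Mbio, Finset.mul_sum, Finset.mul_sum, Finset.mul_sum]
  refine Finset.sum_congr rfl fun j _ => ?_
  have hkey := coeff_key hq hμ (υ * n) (υ * j)
  have hq1 : (0:ℝ) < q + 1 := by linarith
  have hqm1 : (0:ℝ) < q + μ + 1 := by linarith
  have p1 := (poch_pos hq1 (υ * j)).ne'
  have g2 := (Real.Gamma_pos_of_pos (show (0:ℝ) < q + (υ*j:ℕ) + 1 + μ by
    have := hcm j; linarith)).ne'
  have g3 := (Real.Gamma_pos_of_pos (show (0:ℝ) < (υ*n:ℕ) + q + μ + 1 by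
    have : (0:ℝ) ≤ ((υ * n : ℕ) : ℝ) := Nat.cast_nonneg _; linarith)).ne'
  have p4 := (poch_pos hqm1 (υ * j)).ne'
  set K : ℝ := (-1:ℝ) ^ n * ((-1:ℝ) ^ j * (n.choose j : ℝ)) * poch (n + 1 - p) (υ * j) *
      (-w) ^ (υ * j) * (x - a) ^ (q + μ) * (x - a) ^ (υ * j) with hK
  calc (1 / Real.Gamma μ) * (c j * ((x - a) ^ (q + μ) * (x - a) ^ (υ * j) *
          (Real.Gamma (q + (υ * j : ℕ) + 1) * Real.Gamma μ /
            Real.Gamma (q + (υ * j : ℕ) + 1 + μ))))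
      = K * (poch (q + 1) (υ * n) / poch (q + 1) (υ * j) *
          (Real.Gamma (q + (υ * j : ℕ) + 1) / Real.Gamma (q + (υ * j : ℕ) + 1 + μ))) := by
        rw [hcdef, hK]
        have g2' : Real.Gamma (q + (υ:ℝ) * (j:ℝ) + 1 + μ) ≠ 0 := by push_cast at g2; exact g2
        field_simp
    _ = K * (Real.Gamma ((υ * n : ℕ) + q + 1) / Real.Gamma ((υ * n : ℕ) + q + μ + 1) *
          (poch (q + μ + 1) (υ * n) / poch (q + μ + 1) (υ * j))) := by rw [hkey]
    _ = (x - a) ^ (q + μ) * Real.Gamma (υ * n + q + 1) / Real.Gamma (υ * n + q + μ + 1) *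
          ((-1:ℝ) ^ n * poch (q + μ + 1) (υ * n) *
            ((-1:ℝ) ^ j * (n.choose j : ℝ) *
              (poch (n + 1 - p) (υ * j) / poch (q + μ + 1) (υ * j)) *
                (-(w * (x - a))) ^ (υ * j))) := by
        rw [hK, show -(w * (x - a)) = (-w) * (x - a) by ring, mul_pow]
        push_cast at g3 ⊢
        field_simp
end

section
/- For x > a, λ > 0 with n_0 = ⌊λ⌋+1, q > λ−1, and υ a positive integer, the Riemann–Liouville fractional derivative satisfies ₓD_{a⁺}^λ [(x−a)^q M_n(p,q,υ; w(x−a))] = [(x−a)^{q−λ} Γ(υn+q+1) / Γ(υn+q−λ+1)] M_n(p, q−λ, υ; w(x−a)). -/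
open Finset MeasureTheory Real Filter

/-- The Riemann-Liouville fractional integral of order `μ` with base point `a`. -/
noncomputable def fracInt (μ a : ℝ) (f : ℝ → ℝ) (x : ℝ) : ℝ :=
  (1 / Real.Gamma μ) * ∫ t in a..x, (x - t) ^ (μ - 1) * f t

lemma poch_gamma {b : ℝ} (hb : 0 < b) (k : ℕ) :
    Real.Gamma b * poch b k = Real.Gamma (b + k) := by
  induction k with
  | zero => simp [poch]
  | succ k ih =>
    rw [poch, Finset.prod_range_succ, ← mul_assoc, ← poch, ih,
      show b + ((k : ℕ) + 1 : ℕ) = (b + k) + 1 by push_cast; ring,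
      Real.Gamma_add_one (by positivity)]
    push_cast; ring
lemma iter_deriv_congr {U : Set ℝ} (hU : IsOpen U) :
    ∀ (k : ℕ) (f g : ℝ → ℝ), (∀ y ∈ U, f y = g y) → ∀ x ∈ U, deriv^[k] f x = deriv^[k] g x := by
  intro k
  induction k with
  | zero => intro f g h x hx; exact h x hx
  | succ k ih =>
    intro f g h x hx
    rw [Function.iterate_succ_apply', Function.iterate_succ_apply']
    apply Filter.EventuallyEq.deriv_eq
    filter_upwards [hU.mem_nhds hx] with y hy
    exact ih f g h y hy
lemma iter_deriv_powsum (a : ℝ) (m : ℕ) :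
    ∀ (k : ℕ) (C s : ℕ → ℝ) (x : ℝ), a < x →
      deriv^[k] (fun t => ∑ j ∈ Finset.range m, C j * (t - a) ^ (s j)) x
        = ∑ j ∈ Finset.range m, C j * (∏ i ∈ Finset.range k, (s j - i)) * (x - a) ^ (s j - k) := by
  intro k
  induction k with
  | zero => intro C s x hx; simp
  | succ k ih =>
    intro C s x hx
    rw [Function.iterate_succ_apply]
    have h1 : ∀ y ∈ Set.Ioi a,
        deriv (fun t => ∑ j ∈ Finset.range m, C j * (t - a) ^ (s j)) y
          = ∑ j ∈ Finset.range m, (C j * s j) * (y - a) ^ (s j - 1) := by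
      intro y hy
      rw [Set.mem_Ioi] at hy
      have : HasDerivAt (fun t => ∑ j ∈ Finset.range m, C j * (t - a) ^ (s j))
          (∑ j ∈ Finset.range m, (C j * s j) * (y - a) ^ (s j - 1)) y := by
        apply HasDerivAt.fun_sum
        intro j _
        have hbase : HasDerivAt (fun t : ℝ => t - a) 1 y := (hasDerivAt_id y).sub_const a
        have h2 := (Real.hasDerivAt_rpow_const (x := y - a) (p := s j)
          (Or.inl (by intro h; rw [sub_eq_zero] at h; exact absurd h (by linarith)))).comp y hbase
        have h3 := h2.const_mul (C j)
        convert h3 using 1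
        rfl
        rfl
        ring
      exact this.deriv
    rw [iter_deriv_congr isOpen_Ioi k _ _ h1 x hx, ih (fun j => C j * s j) (fun j => s j - 1) x hx]
    apply Finset.sum_congr rfl
    intro j _
    rw [Finset.prod_range_succ']
    have : s j - 1 - (k : ℝ) = s j - ((k : ℕ) + 1 : ℕ) := by push_cast; ring
    rw [this]
    have hp : ∏ i ∈ Finset.range k, (s j - 1 - (i : ℝ)) = ∏ i ∈ Finset.range k, (s j - ((i : ℕ) + 1 : ℕ)) := by
      apply Finset.prod_congr rfl; intro i _; push_cast; ring
    rw [hp]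
    push_cast
    ring
lemma beta_real {b c μ : ℝ} (hb : 0 < b) (hc : -1 < c) (hμ : 0 < μ) :
    ∫ u in (0:ℝ)..b, u ^ c * (b - u) ^ (μ - 1)
      = Real.Gamma (c + 1) * Real.Gamma μ / Real.Gamma (c + 1 + μ) * b ^ (c + μ) := by
  have hc1 : (0:ℝ) < c + 1 := by linarith
  have hGpos : 0 < Real.Gamma (c + 1 + μ) := Real.Gamma_pos_of_pos (by linarith)
  have key : ∫ u in (0:ℝ)..b, (u : ℂ) ^ ((c + 1 : ℝ) - 1 : ℂ) * ((b : ℂ) - u) ^ ((μ : ℝ) - 1 : ℂ)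
      = (b : ℂ) ^ ((c + 1 : ℝ) + (μ : ℝ) - 1 : ℂ) * Complex.betaIntegral (c + 1 : ℝ) (μ : ℝ) :=
    Complex.betaIntegral_scaled _ _ hb
  have hbeta : Complex.betaIntegral (c + 1 : ℝ) (μ : ℝ)
      = Complex.Gamma (c + 1 : ℝ) * Complex.Gamma (μ : ℝ) / Complex.Gamma ((c + 1 : ℝ) + (μ : ℝ)) := by
    have h := Complex.Gamma_mul_Gamma_eq_betaIntegral
      (s := (c + 1 : ℝ)) (t := (μ : ℝ)) (by simpa using hc1) (by simpa using hμ)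
    have hne : Complex.Gamma ((c + 1 : ℝ) + (μ : ℝ)) ≠ 0 := by
      rw [show ((c + 1 : ℝ) : ℂ) + (μ : ℝ) = ((c + 1 + μ : ℝ) : ℂ) by push_cast; ring,
        Complex.Gamma_ofReal]
      exact_mod_cast hGpos.ne'
    rw [eq_div_iff hne, mul_comm]
    exact h.symm
  -- complexify the real integral
  have hcongr : ∫ u in (0:ℝ)..b, (u : ℂ) ^ ((c + 1 : ℝ) - 1 : ℂ) * ((b : ℂ) - u) ^ ((μ : ℝ) - 1 : ℂ)
      = ∫ u in (0:ℝ)..b, ((u ^ c * (b - u) ^ (μ - 1) : ℝ) : ℂ) := by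
    apply intervalIntegral.integral_congr
    intro u hu
    rw [Set.uIcc_of_le hb.le] at hu
    obtain ⟨h0u, hub⟩ := hu
    simp only []
    show (u : ℂ) ^ ((c + 1 : ℝ) - 1 : ℂ) * ((b : ℂ) - u) ^ ((μ : ℝ) - 1 : ℂ)
      = ((u ^ c * (b - u) ^ (μ - 1) : ℝ) : ℂ)
    rw [Complex.ofReal_mul, Complex.ofReal_cpow h0u, Complex.ofReal_cpow (by linarith : (0:ℝ) ≤ b - u)]
    push_cast
    ring_nf
  have hofreal : ∫ u in (0:ℝ)..b, ((u ^ c * (b - u) ^ (μ - 1) : ℝ) : ℂ)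
      = ((∫ u in (0:ℝ)..b, u ^ c * (b - u) ^ (μ - 1) : ℝ) : ℂ) := by
    exact intervalIntegral.integral_ofReal
  have hrhs : (b : ℂ) ^ ((c + 1 : ℝ) + (μ : ℝ) - 1 : ℂ)
      = ((b ^ (c + μ) : ℝ) : ℂ) := by
    rw [show ((c + 1 : ℝ) : ℂ) + (μ : ℝ) - 1 = ((c + μ : ℝ) : ℂ) by push_cast; ring]
    rw [Complex.ofReal_cpow hb.le]
  rw [hcongr, hofreal, hrhs, hbeta] at key
  have : ((∫ u in (0:ℝ)..b, u ^ c * (b - u) ^ (μ - 1) : ℝ) : ℂ)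
      = ((Real.Gamma (c + 1) * Real.Gamma μ / Real.Gamma (c + 1 + μ) * b ^ (c + μ) : ℝ) : ℂ) := by
    rw [key, show ((c + 1 : ℝ) : ℂ) + (μ : ℝ) = ((c + 1 + μ : ℝ) : ℂ) by push_cast; ring,
      Complex.Gamma_ofReal, Complex.Gamma_ofReal, Complex.Gamma_ofReal]
    push_cast
    ring
  exact_mod_cast this
lemma beta_shift {a x c μ : ℝ} (hx : a < x) (hc : -1 < c) (hμ : 0 < μ) :
    ∫ t in a..x, (x - t) ^ (μ - 1) * (t - a) ^ c
      = Real.Gamma (c + 1) * Real.Gamma μ / Real.Gamma (c + 1 + μ) * (x - a) ^ (c + μ) := by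
  have h := intervalIntegral.integral_comp_add_right (a := (0:ℝ)) (b := x - a)
    (fun t => (x - t) ^ (μ - 1) * (t - a) ^ c) a
  simp only [zero_add, sub_add_cancel] at h
  rw [← h]
  have : ∀ u : ℝ, (x - (u + a)) ^ (μ - 1) * (u + a - a) ^ c = u ^ c * ((x - a) - u) ^ (μ - 1) := by
    intro u; rw [show x - (u + a) = (x - a) - u by ring, show u + a - a = u by ring]; ring
  simp only [this]
  exact beta_real (by linarith) hc hμ
lemma beta_integrable {a x c μ : ℝ} (hx : a < x) (hc : -1 < c) (hμ : 0 < μ) :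
    IntervalIntegrable (fun t => (x - t) ^ (μ - 1) * (t - a) ^ c) volume a x := by
  set m := (a + x) / 2 with hm
  have ham : a < m := by rw [hm]; linarith
  have hmx : m < x := by rw [hm]; linarith
  have h1 : IntervalIntegrable (fun t => (x - t) ^ (μ - 1) * (t - a) ^ c) volume a m := by
    have hint : IntervalIntegrable (fun t => (t - a) ^ c) volume a m := by
      have := (intervalIntegral.intervalIntegrable_rpow' (a := 0) (b := m - a) hc).comp_sub_right a
      simpa using this
    have hcont : ContinuousOn (fun t => (x - t) ^ (μ - 1)) (Set.uIcc a m) := by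
      apply ContinuousOn.rpow_const
      · fun_prop
      · intro t ht
        rw [Set.uIcc_of_le ham.le] at ht
        left
        have := ht.2
        intro h
        rw [sub_eq_zero] at h
        exact absurd h.symm (by linarith)
    exact hint.continuousOn_mul hcont
  have h2 : IntervalIntegrable (fun t => (x - t) ^ (μ - 1) * (t - a) ^ c) volume m x := by
    have hint : IntervalIntegrable (fun t => (x - t) ^ (μ - 1)) volume m x := by
      have h0 := (intervalIntegral.intervalIntegrable_rpow' (a := 0) (b := x - m)
        (by linarith : (-1:ℝ) < μ - 1)).comp_sub_left x
      simpa using h0.symm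
    have hcont : ContinuousOn (fun t => (t - a) ^ c) (Set.uIcc m x) := by
      apply ContinuousOn.rpow_const
      · fun_prop
      · intro t ht
        rw [Set.uIcc_of_le hmx.le] at ht
        left
        have := ht.1
        intro h
        rw [sub_eq_zero] at h
        exact absurd h (by linarith)
    exact hint.mul_continuousOn hcont
  exact h1.trans h2
lemma prod_desc (s : ℝ) (k : ℕ) :
    ∏ i ∈ Finset.range k, (s - i) = poch (s + 1 - k) k := by
  rw [poch, ← Finset.prod_range_reflect (fun i => s + 1 - k + i) k]
  apply Finset.prod_congr rfl
  intro i hi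
  rw [Finset.mem_range] at hi
  rw [Nat.cast_sub (by omega), Nat.cast_sub (by omega)]
  push_cast
  ring

theorem fractional_derivative_Mbio (p q w a x l : ℝ) (υ n : ℕ) (hl : 0 < l)
    (hq : q > l - 1) (hυ : 0 < υ) (hx : a < x) :
    deriv^[⌊l⌋₊ + 1]
        (fracInt ((⌊l⌋₊ + 1 : ℕ) - l) a (fun t => (t - a) ^ q * Mbio p q υ n (w * (t - a)))) x =
      (x - a) ^ (q - l) * Real.Gamma (υ * n + q + 1) / Real.Gamma (υ * n + q - l + 1) *
        Mbio p (q - l) υ n (w * (x - a)) := by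
  set n0 : ℕ := ⌊l⌋₊ + 1 with hn0
  set μ : ℝ := (n0 : ℝ) - l with hμdef
  have hμ : 0 < μ := by
    have := Nat.lt_floor_add_one l
    rw [hμdef, hn0]
    push_cast
    linarith
  clear_value n0 μ
  have hq' : (-1:ℝ) < q := by linarith
  have hql : 0 < q - l + 1 := by linarith
  -- coefficients and exponents
  set s : ℕ → ℝ := fun j => q + ((υ * j : ℕ) : ℝ) with hs
  set K : ℕ → ℝ := fun j => (-1:ℝ)^n * poch (q+1) (υ*n) *
      ((-1:ℝ)^j * (n.choose j : ℝ) * (poch (↑n+1-p) (υ*j) / poch (q+1) (υ*j)) * (-w)^(υ*j))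
    with hK
  clear_value s K
  have hs_pos : ∀ j, -1 < s j := by
    intro j; rw [hs]; have : (0:ℝ) ≤ ((υ*j : ℕ):ℝ) := by positivity
    simp only []; linarith
  have hsl : ∀ j, 0 < s j - l + 1 := by
    intro j; rw [hs]; have : (0:ℝ) ≤ ((υ*j : ℕ):ℝ) := by positivity
    simp only []; linarith
  -- Step A : expansion of the integrand
  have hFG : ∀ t : ℝ, a < t →
      (t - a) ^ q * Mbio p q υ n (w * (t - a))
        = ∑ j ∈ Finset.range (n+1), K j * (t - a) ^ (s j) := by
    intro t ht
    rw [Mbio, Finset.mul_sum, Finset.mul_sum]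
    apply Finset.sum_congr rfl
    intro j _
    rw [hK, hs]
    simp only []
    have h1 : (-(w * (t - a)))^(υ*j) = (-w)^(υ*j) * (t - a)^(υ*j) := by
      rw [← mul_pow]; ring_nf
    have h2 : (t - a) ^ (q + ((υ*j : ℕ):ℝ)) = (t - a) ^ q * (t - a) ^ (υ*j) := by
      rw [Real.rpow_add (by linarith), Real.rpow_natCast]
    rw [h1, h2]
    ring
  -- Step B : value of the fractional integral on (a, ∞)
  set H : ℝ → ℝ := fun y => ∑ j ∈ Finset.range (n+1),
      (K j * (Real.Gamma (s j + 1) / Real.Gamma (s j + 1 + μ))) * (y - a) ^ (s j + μ) with hH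
  clear_value H
  have hB : ∀ y ∈ Set.Ioi a,
      fracInt μ a (fun t => (t - a) ^ q * Mbio p q υ n (w * (t - a))) y = H y := by
    intro y hy
    rw [Set.mem_Ioi] at hy
    rw [fracInt]
    have hint : (∫ t in a..y, (y - t) ^ (μ - 1) * ((t - a) ^ q * Mbio p q υ n (w * (t - a))))
        = ∫ t in a..y, ∑ j ∈ Finset.range (n+1), K j * ((y - t) ^ (μ - 1) * (t - a) ^ (s j)) := by
      apply intervalIntegral.integral_congr_ae
      apply Filter.Eventually.of_forall
      intro t ht
      rw [Set.uIoc_of_le hy.le, Set.mem_Ioc] at ht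
      rw [hFG t ht.1, Finset.mul_sum]
      apply Finset.sum_congr rfl
      intro j _; ring
    rw [hint, intervalIntegral.integral_finset_sum (fun j _ =>
      (beta_integrable hy (hs_pos j) hμ).const_mul (K j))]
    rw [Finset.mul_sum, hH]
    apply Finset.sum_congr rfl
    intro j _
    rw [intervalIntegral.integral_const_mul, beta_shift hy (hs_pos j) hμ]
    have hΓμ : Real.Gamma μ ≠ 0 := (Real.Gamma_pos_of_pos hμ).ne'
    field_simp [hΓμ]
  -- Step C + D : iterated derivative
  have hC : deriv^[n0] (fracInt μ a (fun t => (t - a) ^ q * Mbio p q υ n (w * (t - a)))) x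
      = deriv^[n0] H x := iter_deriv_congr isOpen_Ioi n0 _ _ hB x hx
  have hD : deriv^[n0] H x = ∑ j ∈ Finset.range (n+1),
      (K j * (Real.Gamma (s j + 1) / Real.Gamma (s j + 1 + μ))
        * ∏ i ∈ Finset.range n0, (s j + μ - i)) * (x - a) ^ (s j + μ - (n0:ℝ)) := by
    rw [hH]
    exact iter_deriv_powsum a (n+1) n0
      (fun j => K j * (Real.Gamma (s j + 1) / Real.Gamma (s j + 1 + μ))) (fun j => s j + μ) x hx
  rw [hC, hD]
  -- Step E+F : simplify each term and match with RHS
  rw [Mbio]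
  simp only [Finset.mul_sum]
  apply Finset.sum_congr rfl
  intro j hj
  -- product of descending factors
  have hE : ∏ i ∈ Finset.range n0, (s j + μ - i) = Real.Gamma (s j + 1 + μ) / Real.Gamma (s j - l + 1) := by
    rw [prod_desc]
    have hb : (0:ℝ) < s j + μ + 1 - n0 := by
      have := hsl j; rw [hμdef]; linarith
    have h := poch_gamma hb n0
    have e1 : s j + μ + 1 - (n0:ℝ) = s j - l + 1 := by rw [hμdef]; ring
    rw [e1] at h ⊢
    have e2 : s j - l + 1 + (n0:ℝ) = s j + 1 + μ := by rw [hμdef]; push_cast; ring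
    rw [e2] at h
    have hΓ : Real.Gamma (s j - l + 1) ≠ 0 := (Real.Gamma_pos_of_pos (hsl j)).ne'
    rw [eq_div_iff hΓ]
    linear_combination h
  -- Gamma values
  have hq1 : (0:ℝ) < q + 1 := by linarith
  have hA := poch_gamma hq1 (υ*n)
  have hBj := poch_gamma hq1 (υ*j)
  have hC2 := poch_gamma hql (υ*n)
  have hD2 := poch_gamma hql (υ*j)
  have hG1 : Real.Gamma (q+1) ≠ 0 := (Real.Gamma_pos_of_pos hq1).ne'
  have hG2 : Real.Gamma (q-l+1) ≠ 0 := (Real.Gamma_pos_of_pos hql).ne'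
  have hGB : Real.Gamma (q + 1 + (↑(υ*j):ℝ)) ≠ 0 :=
    (Real.Gamma_pos_of_pos (by positivity)).ne'
  have hGD : Real.Gamma (q - l + 1 + (↑(υ*j):ℝ)) ≠ 0 :=
    (Real.Gamma_pos_of_pos (by positivity)).ne'
  have hGsl : Real.Gamma (s j - l + 1) ≠ 0 := (Real.Gamma_pos_of_pos (hsl j)).ne'
  have hGs1μ : Real.Gamma (s j + 1 + μ) ≠ 0 := by
    apply (Real.Gamma_pos_of_pos _).ne'
    have := hs_pos j; linarith
  have hGs1 : Real.Gamma (s j + 1) ≠ 0 := by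
    apply (Real.Gamma_pos_of_pos _).ne'
    have := hs_pos j; linarith
  -- normalize Gamma arguments
  have eArg1 : (↑υ*↑n + q + 1 : ℝ) = q + 1 + (↑(υ*n):ℝ) := by push_cast; ring
  have eArg2 : (↑υ*↑n + q - l + 1 : ℝ) = q - l + 1 + (↑(υ*n):ℝ) := by push_cast; ring
  have eArg3 : s j + 1 = q + 1 + (↑(υ*j):ℝ) := by rw [hs]; ring
  have eArg4 : s j - l + 1 = q - l + 1 + (↑(υ*j):ℝ) := by rw [hs]; ring
  -- powers of (x - a)
  have ePow : (x - a) ^ (s j + μ - (n0:ℝ)) = (x - a) ^ (q - l) * (x - a) ^ (υ*j) := by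
    rw [show s j + μ - (n0:ℝ) = (q - l) + ((υ*j:ℕ):ℝ) by rw [hs, hμdef]; ring,
      Real.rpow_add (by linarith), Real.rpow_natCast]
  have ePow2 : (-(w * (x - a)))^(υ*j) = (-w)^(υ*j) * (x - a)^(υ*j) := by
    rw [← mul_pow]; ring_nf
  rw [hK]
  simp only []
  -- turn poch into Gamma ratios
  have pA : poch (q+1) (υ*n) = Real.Gamma (q + 1 + (↑(υ*n):ℝ)) / Real.Gamma (q+1) := by
    rw [eq_div_iff hG1]; linear_combination hA
  have pB : poch (q+1) (υ*j) = Real.Gamma (q + 1 + (↑(υ*j):ℝ)) / Real.Gamma (q+1) := by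
    rw [eq_div_iff hG1]; linear_combination hBj
  have pC : poch (q-l+1) (υ*n) = Real.Gamma (q - l + 1 + (↑(υ*n):ℝ)) / Real.Gamma (q-l+1) := by
    rw [eq_div_iff hG2]; linear_combination hC2
  have pD : poch (q-l+1) (υ*j) = Real.Gamma (q - l + 1 + (↑(υ*j):ℝ)) / Real.Gamma (q-l+1) := by
    rw [eq_div_iff hG2]; linear_combination hD2
  rw [hE, ePow, ePow2, eArg1, eArg2, eArg3, eArg4, pA, pB, pC, pD]
  have hGA : Real.Gamma (q + 1 + (↑(υ*n):ℝ)) ≠ 0 := (Real.Gamma_pos_of_pos (by positivity)).ne'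
  have hGC : Real.Gamma (q - l + 1 + (↑(υ*n):ℝ)) ≠ 0 := (Real.Gamma_pos_of_pos (by positivity)).ne'
  set GA := Real.Gamma (q + 1 + (↑(υ*n):ℝ))
  set GB := Real.Gamma (q + 1 + (↑(υ*j):ℝ))
  set GC := Real.Gamma (q - l + 1 + (↑(υ*n):ℝ))
  set GD := Real.Gamma (q - l + 1 + (↑(υ*j):ℝ))
  set G1 := Real.Gamma (q + 1)
  set G2 := Real.Gamma (q - l + 1)
  have hGm : Real.Gamma (q + 1 + (↑(υ*j):ℝ) + μ) ≠ 0 :=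
    (Real.Gamma_pos_of_pos (by positivity)).ne'
  set GA := Real.Gamma (q + 1 + (↑(υ*n):ℝ))
  set GB := Real.Gamma (q + 1 + (↑(υ*j):ℝ))
  set GC := Real.Gamma (q - l + 1 + (↑(υ*n):ℝ))
  set GD := Real.Gamma (q - l + 1 + (↑(υ*j):ℝ))
  set G1 := Real.Gamma (q + 1)
  set G2 := Real.Gamma (q - l + 1)
  set Gm := Real.Gamma (q + 1 + (↑(υ*j):ℝ) + μ)
  clear_value GA GB GC GD G1 G2 Gm
  field_simp [hG1, hG2, hGA, hGB, hGC, hGD, hGm]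
end

section
/- Carlitz's identity: for real α, positive integer υ, and nonnegative integers n, ((x+α+1)/υ)_n = Σ_{r=0}^n C(−x+r−1, r) Σ_{s=0}^r (−1)^s C(r,s) ((s+α+1)/υ)_n, where C(−x+r−1, r) = (−x)(−x+1)⋯(−x+r−1)/r! is the generalized binomial coefficient. -/
open Finset MeasureTheory Real Filter

lemma alt_sum_real (n : ℕ) :
    (∑ m ∈ range (n + 1), ((-1 : ℝ) ^ m * n.choose m)) = if n = 0 then 1 else 0 := by
  have h := Int.alternating_sum_range_choose (n := n)
  have h2 : ((∑ m ∈ range (n + 1), ((-1) ^ m * n.choose m : ℤ) : ℤ) : ℝ)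
      = ∑ m ∈ range (n + 1), ((-1 : ℝ) ^ m * n.choose m) := by push_cast; exact Finset.sum_congr rfl fun _ _ => by ring
  rw [← h2, h]
  split <;> simp

lemma binom_inv (f : ℕ → ℝ) (m : ℕ) :
    ∑ r ∈ range (m + 1), (-1 : ℝ) ^ r * (m.choose r : ℝ) *
      (∑ s ∈ range (r + 1), (-1 : ℝ) ^ s * (r.choose s : ℝ) * f s) = f m := by
  have hinner : ∀ r ∈ range (m + 1),
      (-1 : ℝ) ^ r * (m.choose r : ℝ) *
        (∑ s ∈ range (r + 1), (-1 : ℝ) ^ s * (r.choose s : ℝ) * f s)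
      = ∑ s ∈ range (m + 1), (-1 : ℝ) ^ r * (m.choose r : ℝ) *
          ((-1 : ℝ) ^ s * (r.choose s : ℝ) * f s) := by
    intro r hr
    rw [mul_sum]
    refine Finset.sum_subset ?_ ?_
    · intro y hy; simp only [mem_range] at hy hr ⊢; omega
    intro s _ hs
    simp only [mem_range, not_lt] at hs
    have : r.choose s = 0 := Nat.choose_eq_zero_of_lt (by omega)
    simp [this]
  rw [Finset.sum_congr rfl hinner, Finset.sum_comm]
  have hcol : ∀ s ∈ range (m + 1),
      (∑ r ∈ range (m + 1), (-1 : ℝ) ^ r * (m.choose r : ℝ) *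
        ((-1 : ℝ) ^ s * (r.choose s : ℝ) * f s))
      = if s = m then f m else 0 := by
    intro s hs
    simp only [mem_range] at hs
    have hsm : s ≤ m := by omega
    rw [range_eq_Ico, ← Finset.sum_subset (Finset.Ico_subset_Ico (Nat.zero_le s) le_rfl : Finset.Ico s (m+1) ⊆ Finset.Ico 0 (m+1)) ?van]
    · rw [Finset.sum_Ico_eq_sum_range]
      have hsub : m + 1 - s = (m - s) + 1 := by omega
      rw [hsub]
      have hterm : ∀ t ∈ range ((m - s) + 1),
          (-1 : ℝ) ^ (s + t) * (m.choose (s + t) : ℝ) *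
            ((-1 : ℝ) ^ s * ((s + t).choose s : ℝ) * f s)
          = ((-1 : ℝ) ^ t * ((m - s).choose t : ℝ)) * ((m.choose s : ℝ) * f s) := by
        intro t ht
        simp only [mem_range] at ht
        have hc : m.choose (s + t) * (s + t).choose s = m.choose s * (m - s).choose t := by
          have := Nat.choose_mul (n := m) (k := s + t) (s := s) (by omega)
          simpa using this
        have hcR : (m.choose (s + t) : ℝ) * ((s + t).choose s : ℝ)
            = (m.choose s : ℝ) * ((m - s).choose t : ℝ) := by exact_mod_cast congrArg (Nat.cast : ℕ → ℝ) hc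
        have hs1 : ((-1:ℝ) ^ s) * ((-1:ℝ) ^ s) = 1 := by
          rw [← pow_add, ← two_mul, pow_mul]; norm_num
        calc (-1 : ℝ) ^ (s + t) * (m.choose (s + t) : ℝ) *
              ((-1 : ℝ) ^ s * ((s + t).choose s : ℝ) * f s)
            = ((-1:ℝ) ^ s * (-1:ℝ) ^ s) *
              ((-1:ℝ) ^ t * ((m.choose (s+t) : ℝ) * (((s+t).choose s : ℕ) : ℝ)) * f s) := by
              rw [pow_add]; ring
          _ = ((-1:ℝ) ^ t * ((m.choose s : ℝ) * (((m-s).choose t : ℕ) : ℝ)) * f s) := by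
              rw [hs1, hcR]; ring
          _ = ((-1 : ℝ) ^ t * ((m - s).choose t : ℝ)) * ((m.choose s : ℝ) * f s) := by ring
      rw [Finset.sum_congr rfl hterm, ← Finset.sum_mul, alt_sum_real]
      by_cases h : s = m
      · simp [h]
      · have : m - s ≠ 0 := by omega
        simp [h, this]
    · intro r hr hnr
      have : r < s := by
        simp only [Finset.mem_Ico] at hr hnr; omega
      have : r.choose s = 0 := Nat.choose_eq_zero_of_lt this
      simp [this]
  rw [Finset.sum_congr rfl hcol, Finset.sum_ite_eq' (range (m+1)) m (fun _ => f m)]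
  simp

lemma poch_neg_nat (m r : ℕ) :
    poch (-(m : ℝ)) r = (-1 : ℝ) ^ r * (r.factorial : ℝ) * (m.choose r : ℝ) := by
  induction r with
  | zero => simp [poch]
  | succ r ih =>
    rw [poch, Finset.prod_range_succ, ← poch, ih]
    rcases le_or_gt (r + 1) m with h | h
    · have hch : (m.choose (r + 1) : ℝ) * ((r : ℝ) + 1) = (m.choose r : ℝ) * ((m : ℝ) - r) := by
        have h0 := Nat.choose_succ_right_eq m r
        have hcast : ((m.choose (r + 1) * (r + 1) : ℕ) : ℝ) = ((m.choose r * (m - r) : ℕ) : ℝ) := by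
          exact_mod_cast congrArg (Nat.cast : ℕ → ℝ) h0
        push_cast [Nat.cast_sub (by omega : r ≤ m)] at hcast
        exact_mod_cast hcast
      rw [Nat.factorial_succ, pow_succ]
      push_cast
      linear_combination ((-1 : ℝ) ^ r * (r.factorial : ℝ)) * hch
    · have h1 : m.choose (r + 1) = 0 := Nat.choose_eq_zero_of_lt (by omega)
      rcases eq_or_lt_of_le (show m ≤ r by omega) with he | hlt
      · subst he; simp [h1]
      · have h2 : m.choose r = 0 := Nat.choose_eq_zero_of_lt hlt
        simp [h1, h2]

lemma discrete_key (g : ℕ → ℝ) (n m : ℕ) (hmn : m ≤ n) :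
    ∑ r ∈ range (n + 1), (poch (-(m : ℝ)) r / r.factorial) *
      (∑ s ∈ range (r + 1), (-1 : ℝ) ^ s * (r.choose s : ℝ) * g s) = g m := by
  rw [← Finset.sum_subset (range_subset_range.2 (by omega) : range (m + 1) ⊆ range (n + 1)) ?van]
  case van =>
    intro r hr hnr
    simp only [mem_range, not_lt] at hnr
    have : m.choose r = 0 := Nat.choose_eq_zero_of_lt (by omega)
    rw [poch_neg_nat, this]
    simp
  rw [← binom_inv g m]
  refine Finset.sum_congr rfl fun r _ => ?_
  rw [poch_neg_nat]
  have hf : (r.factorial : ℝ) ≠ 0 := by exact_mod_cast r.factorial_ne_zero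
  field_simp


open Polynomial

theorem carlitz_identity (x α : ℝ) (υ n : ℕ) (hυ : 0 < υ) :
    poch ((x + α + 1) / υ) n =
      ∑ r ∈ Finset.range (n + 1), (poch (-x) r / r.factorial) *
        ∑ s ∈ Finset.range (r + 1),
          (-1 : ℝ) ^ s * (r.choose s : ℝ) * poch ((s + α + 1) / υ) n := by
  set g : ℕ → ℝ := fun s => poch ((s + α + 1) / υ) n with hg
  set c : ℕ → ℝ := fun r =>
    (∑ s ∈ Finset.range (r + 1), (-1 : ℝ) ^ s * (r.choose s : ℝ) * g s) / r.factorial with hc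
  set P : ℝ[X] := ∏ i ∈ range n, (C ((υ : ℝ)⁻¹) * (X + C (α + 1)) + C (i : ℝ)) with hP
  set Q : ℝ[X] := ∑ r ∈ range (n + 1), C (c r) * ∏ i ∈ range r, (C (i : ℝ) - X) with hQ
  have evalP : ∀ y : ℝ, P.eval y = poch ((y + α + 1) / υ) n := by
    intro y
    rw [hP, eval_prod, poch]
    refine Finset.prod_congr rfl fun i _ => ?_
    simp [div_eq_mul_inv]
    ring
  have evalQ : ∀ y : ℝ, Q.eval y =
      ∑ r ∈ range (n + 1), (poch (-y) r / r.factorial) *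
        (∑ s ∈ Finset.range (r + 1), (-1 : ℝ) ^ s * (r.choose s : ℝ) * g s) := by
    intro y
    rw [hQ, eval_finset_sum]
    refine Finset.sum_congr rfl fun r _ => ?_
    rw [eval_mul, eval_C, eval_prod, hc]
    have : ∏ i ∈ range r, ((C (i:ℝ) - X).eval y) = poch (-y) r := by
      rw [poch]; refine Finset.prod_congr rfl fun i _ => ?_; simp; ring
    rw [this]
    field_simp
  have degP : P.natDegree ≤ n := by
    refine (Polynomial.natDegree_prod_le _ _).trans ?_
    calc ∑ i ∈ range n, (C ((υ : ℝ)⁻¹) * (X + C (α + 1)) + C (i : ℝ)).natDegree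
        ≤ ∑ _i ∈ range n, 1 := by
          refine Finset.sum_le_sum fun i _ => ?_
          refine (Polynomial.natDegree_add_le _ _).trans ?_
          simp only [Polynomial.natDegree_C, max_le_iff]
          exact ⟨(Polynomial.natDegree_C_mul_le _ _).trans (by compute_degree), Nat.zero_le _⟩
      _ = n := by simp
  have degQ : Q.natDegree ≤ n := by
    refine Polynomial.natDegree_sum_le_of_forall_le _ _ fun r hr => ?_
    simp only [mem_range] at hr
    refine (Polynomial.natDegree_C_mul_le _ _).trans ?_
    refine (Polynomial.natDegree_prod_le _ _).trans ?_
    calc ∑ i ∈ range r, (C (i:ℝ) - X).natDegree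
        ≤ ∑ _i ∈ range r, 1 := by
          refine Finset.sum_le_sum fun i _ => ?_
          refine (Polynomial.natDegree_sub_le _ _).trans (by simp)
      _ = r := by simp
      _ ≤ n := by omega
  have hPQ : P = Q := by
    set s : Finset ℝ := (range (n + 1)).image (Nat.cast : ℕ → ℝ) with hs
    have hcard : #s = n + 1 := by
      rw [hs, Finset.card_image_of_injective _ Nat.cast_injective, Finset.card_range]
    refine Polynomial.eq_of_degrees_lt_of_eval_finset_eq s ?_ ?_ ?_
    · rw [hcard]
      exact lt_of_le_of_lt Polynomial.degree_le_natDegree (by exact_mod_cast Nat.lt_succ_of_le degP)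
    · rw [hcard]
      exact lt_of_le_of_lt Polynomial.degree_le_natDegree (by exact_mod_cast Nat.lt_succ_of_le degQ)
    · intro y hy
      rw [hs, Finset.mem_image] at hy
      obtain ⟨m, hm, rfl⟩ := hy
      simp only [mem_range] at hm
      rw [evalP, evalQ, discrete_key g n m (by omega)]
  have := congrArg (Polynomial.eval x) hPQ
  rw [evalP, evalQ] at this
  exact this
end

section
/- For q > -1, p > (υ+1)n + 1 and 0 ≤ j < n, ∫_0^∞ x^{q+j} (1+x)^{-(p+q)} M_n(p,q,υ;x) dx = 0, i.e., M_n(p,q,υ;·) is orthogonal to all powers x^j with j < n with respect to the weight x^q(1+x)^{-(p+q)} on (0,∞). -/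
open Finset MeasureTheory Real Filter

section Helpers

open Finset MeasureTheory Real Filter Set Topology Polynomial fwdDiff

namespace MbioAux

lemma poch_pos {a : ℝ} (ha : 0 < a) (m : ℕ) : 0 < poch a m :=
  Finset.prod_pos fun i _ => by positivity

lemma poch_add (a : ℝ) (m l : ℕ) : poch a (m + l) = poch a m * poch (a + m) l := by
  rw [poch, poch, poch, Finset.prod_range_add]
  congr 1
  refine Finset.prod_congr rfl fun i _ => ?_
  push_cast; ring

lemma prod_desc (b : ℝ) (m : ℕ) :
    ∏ i ∈ range m, (b - i) = poch (b - m + 1) m := by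
  rw [poch, ← Finset.prod_range_reflect]
  refine Finset.prod_congr rfl fun i hi => ?_
  rw [Finset.mem_range] at hi
  have : ((m - 1 - i : ℕ) : ℝ) = (m : ℝ) - 1 - i := by
    push_cast [Nat.cast_sub (by omega : i ≤ m - 1), Nat.cast_sub (by omega : 1 ≤ m)]; ring
  rw [this]; ring

lemma poch_neg_reflect (c : ℝ) (m : ℕ) : poch (1 - c) m = (-1:ℝ)^m * poch (c - m) m := by
  have h0 : poch (1 - c) m = ∏ i ∈ range m, (-((c - 1) - i)) :=
    Finset.prod_congr rfl fun i _ => by ring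
  have h2 : ∀ i:ℕ, -((c-1) - (i:ℝ)) = (-1) * ((c-1) - i) := fun i => by ring
  simp only [h0, h2]
  rw [Finset.prod_mul_distrib, Finset.prod_const, prod_desc, Finset.card_range]
  ring_nf

lemma fwdDiff_iter_zero_fun (n : ℕ) : (Δ_[(1:ℝ)])^[n] (fun _ : ℝ => (0:ℝ)) = fun _ => 0 := by
  induction n with
  | zero => rfl
  | succ n ih => rw [Function.iterate_succ_apply', ih]; simp

lemma fwdDiff_iter_poly : ∀ (n : ℕ) (P : ℝ[X]), P.natDegree < n →
    (Δ_[(1:ℝ)])^[n] (fun x => P.eval x) = fun _ => 0 := by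
  intro n
  induction n with
  | zero => intro P hP; exact absurd hP (Nat.not_lt_zero _)
  | succ n ih =>
    intro P hP
    rw [Function.iterate_succ_apply]
    have hD : Δ_[(1:ℝ)] (fun x => P.eval x) = fun x => (P.comp (X + C 1) - P).eval x := by
      funext x; simp [fwdDiff, eval_comp]
    rw [hD]
    set Q := P.comp (X + C 1) - P with hQdef
    by_cases hQ : Q = 0
    · rw [hQ]; simpa using fwdDiff_iter_zero_fun n
    · by_cases hd : P.natDegree = 0
      · exfalso; apply hQ
        rw [hQdef, Polynomial.eq_C_of_natDegree_eq_zero hd]; simp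
      · apply ih
        have hP0 : P ≠ 0 := fun h => hd (by simp [h])
        have hlead : (P.comp (X + C 1)).leadingCoeff = P.leadingCoeff := by
          rw [leadingCoeff_comp (by rw [natDegree_X_add_C]; exact one_ne_zero),
            leadingCoeff_X_add_C, one_pow, mul_one]
        have hcompne : P.comp (X + C 1) ≠ 0 := by
          rw [← leadingCoeff_ne_zero, hlead, leadingCoeff_ne_zero]; exact hP0
        have hcomp : (P.comp (X + C 1)).degree = P.degree := by
          rw [degree_eq_natDegree hcompne, degree_eq_natDegree hP0, natDegree_comp,
            natDegree_X_add_C, mul_one]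
        have hdeg : Q.degree < P.degree := by
          have := degree_sub_lt hcomp hcompne hlead
          rwa [hcomp] at this
        have h2 : Q.natDegree < P.natDegree := natDegree_lt_natDegree hQ hdeg
        omega

lemma alt_sum_poly_eval (n : ℕ) (P : ℝ[X]) (hP : P.natDegree < n) :
    ∑ k ∈ range (n + 1), (-1:ℝ)^k * (n.choose k : ℝ) * P.eval (k:ℝ) = 0 := by
  have key := fwdDiff_iter_eq_sum_shift (1:ℝ) (fun x => P.eval x) n 0
  rw [fwdDiff_iter_poly n P hP] at key
  simp only [zero_add, nsmul_eq_mul, mul_one, zsmul_eq_mul, Int.cast_mul, Int.cast_pow,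
    Int.cast_neg, Int.cast_one, Int.cast_natCast] at key
  have : ∑ k ∈ range (n + 1), (-1:ℝ)^k * (n.choose k : ℝ) * P.eval (k:ℝ)
      = (-1:ℝ)^n * ∑ k ∈ range (n+1), (-1:ℝ)^(n-k) * (n.choose k : ℝ) * P.eval (k:ℝ) := by
    rw [mul_sum]
    refine Finset.sum_congr rfl fun k hk => ?_
    have hk' : k ≤ n := by simpa [Nat.lt_succ_iff] using hk
    have e : (-1:ℝ)^n * (-1:ℝ)^(n-k) = (-1:ℝ)^k := by
      rw [← pow_add]
      have h3 : n + (n-k) = 2*(n-k) + k := by omega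
      rw [h3, pow_add, pow_mul]; simp
    rw [← mul_assoc, ← mul_assoc, e]
  rw [this, ← key, mul_zero]

lemma alt_sum_f (p q : ℝ) (υ n j : ℕ) (hj : j < n) :
    ∑ k ∈ range (n+1), (-1:ℝ)^k * (n.choose k : ℝ) *
      (poch (q+1+((υ*k:ℕ):ℝ)) j * poch (p-(n:ℝ)-((υ*k:ℕ):ℝ)) (n-1-j)) = 0 := by
  set P : ℝ[X] := (∏ i ∈ range j, (C (υ:ℝ) * X + C (q+1+i))) *
    (∏ i ∈ range (n-1-j), (C (-(υ:ℝ)) * X + C (p-(n:ℝ)+i))) with hP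
  have hdeg : P.natDegree < n := by
    have h1 : (∏ i ∈ range j, (C (υ:ℝ) * X + C (q+1+(i:ℝ)))).natDegree ≤ j := by
      refine (Polynomial.natDegree_prod_le _ _).trans
        ((Finset.sum_le_card_nsmul _ _ 1 (fun i _ => natDegree_linear_le)).trans (by simp))
    have h2 : (∏ i ∈ range (n-1-j), (C (-(υ:ℝ)) * X + C (p-(n:ℝ)+i))).natDegree ≤ n-1-j := by
      refine (Polynomial.natDegree_prod_le _ _).trans
        ((Finset.sum_le_card_nsmul _ _ 1 (fun i _ => natDegree_linear_le)).trans (by simp))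
    have := (Polynomial.natDegree_mul_le (p := ∏ i ∈ range j, (C (υ:ℝ) * X + C (q+1+(i:ℝ))))
      (q := ∏ i ∈ range (n-1-j), (C (-(υ:ℝ)) * X + C (p-(n:ℝ)+(i:ℝ)))))
    rw [← hP] at this
    omega
  have heval : ∀ k : ℕ, P.eval (k:ℝ)
      = poch (q+1+((υ*k:ℕ):ℝ)) j * poch (p-(n:ℝ)-((υ*k:ℕ):ℝ)) (n-1-j) := by
    intro k
    rw [hP, eval_mul, eval_prod, eval_prod, poch, poch]
    congr 1
    · refine Finset.prod_congr rfl fun i _ => ?_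
      simp only [eval_add, eval_mul, eval_C, eval_X]
      push_cast; ring
    · refine Finset.prod_congr rfl fun i _ => ?_
      simp only [eval_add, eval_mul, eval_C, eval_X]
      push_cast; ring
  have := alt_sum_poly_eval n P hdeg
  rw [← this]
  exact Finset.sum_congr rfl fun k _ => by rw [heval k]

lemma per_k (p q : ℝ) (υ n j k : ℕ) (hq : -1 < q) (hυ : 1 ≤ υ) (hj : j < n) (hk : k ≤ n)
    (hp : ((υ:ℝ)+1)*n + 1 < p) :
    poch ((n:ℝ)+1-p) (υ*k) / poch (q+1) (υ*k) * (-1:ℝ)^(υ*k) *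
      ∏ i ∈ range (j + υ*k), ((q+1+(i:ℝ))/(p-2-(i:ℝ)))
    = (poch (q+1+(υ*k:ℕ)) j * poch (p-(n:ℝ)-(υ*k:ℕ)) (n-1-j)) /
      ((∏ i ∈ range j, (p-2-(i:ℝ))) * poch (p-(n:ℝ)) (n-1-j)) := by
  set m := υ * k with hm
  set d := n - 1 - j with hd
  have hdc : ((d:ℕ):ℝ) = (n:ℝ) - 1 - j := by
    rw [hd]; push_cast [Nat.cast_sub (by omega : j ≤ n - 1), Nat.cast_sub (by omega : 1 ≤ n)]; ring
  have hn1 : (1:ℝ) ≤ (υ:ℝ) := by exact_mod_cast hυ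
  have hkn : ((k:ℕ):ℝ) ≤ (n:ℝ) := by exact_mod_cast hk
  have hjn : ((j:ℕ):ℝ) ≤ (n:ℝ) - 1 := by
    have : ((j:ℕ):ℝ) + 1 ≤ (n:ℝ) := by exact_mod_cast hj
    linarith
  have hmn : ((m:ℕ):ℝ) ≤ (υ:ℝ) * n := by
    rw [hm]; push_cast
    exact mul_le_mul_of_nonneg_left hkn (by linarith)
  have hnn : (0:ℝ) ≤ n := Nat.cast_nonneg n
  have A1 : (0:ℝ) < q + 1 := by linarith
  have A3 : (0:ℝ) < p - n - m := by nlinarith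
  have A4 : (0:ℝ) < p - 1 - j - m := by nlinarith
  have A5 : (0:ℝ) < p - n := by nlinarith
  have hpoch1 : poch (q+1) m ≠ 0 := (poch_pos A1 m).ne'
  have hpochA4 : poch (p-1-(j:ℝ)-m) m ≠ 0 := (poch_pos A4 m).ne'
  have hpochA5 : poch (p-(n:ℝ)) d ≠ 0 := (poch_pos A5 d).ne'
  have hDj : (∏ i ∈ range j, (p-2-(i:ℝ))) ≠ 0 := by
    refine (Finset.prod_pos fun i hi => ?_).ne'
    rw [Finset.mem_range] at hi
    have : ((i:ℕ):ℝ) ≤ (j:ℝ) - 1 := by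
      have : (i:ℝ) + 1 ≤ (j:ℝ) := by exact_mod_cast hi
      linarith
    nlinarith
  have e1 : ∏ i ∈ range (j + m), ((q+1+(i:ℝ))/(p-2-(i:ℝ)))
      = poch (q+1) (j+m) / ∏ i ∈ range (j+m), (p-2-(i:ℝ)) := by
    rw [Finset.prod_div_distrib, poch]
  have e2 : poch (q+1) (j+m) = poch (q+1) m * poch (q+1+m) j := by
    rw [Nat.add_comm j m, poch_add]
  have e3 : poch ((n:ℝ)+1-p) m = (-1:ℝ)^m * poch (p-(n:ℝ)-m) m := by
    have h : (n:ℝ)+1-p = 1 - (p - n) := by ring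
    rw [h, poch_neg_reflect]
  have e4 : ∏ i ∈ range (j + m), (p-2-(i:ℝ))
      = (∏ i ∈ range j, (p-2-(i:ℝ))) * poch (p-1-(j:ℝ)-m) m := by
    rw [Finset.prod_range_add]
    congr 1
    have : ∀ i ∈ range m, (p - 2 - ((j + i : ℕ):ℝ)) = (p - 2 - (j:ℝ)) - i := by
      intro i _; push_cast; ring
    rw [Finset.prod_congr rfl this, prod_desc]
    congr 1
    ring
  have h1 := poch_add (p-(n:ℝ)-m) m d
  have h2 := poch_add (p-(n:ℝ)-m) d m
  rw [show p-(n:ℝ)-(m:ℝ)+(m:ℝ) = p - n by ring] at h1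
  rw [show p-(n:ℝ)-(m:ℝ)+((d:ℕ):ℝ) = p-1-(j:ℝ)-m by rw [hdc]; ring] at h2
  rw [Nat.add_comm m d] at h1
  have star : poch (p-(n:ℝ)-m) m * poch (p-(n:ℝ)) d
      = poch (p-(n:ℝ)-m) d * poch (p-1-(j:ℝ)-m) m := by
    linear_combination h2 - h1
  rw [e1, e2, e3, e4]
  have hsq : ((-1:ℝ))^m * (-1:ℝ)^m = 1 := by
    rw [← pow_add]
    exact (neg_one_pow_eq_one_iff_even (by norm_num)).mpr ⟨m, rfl⟩
  field_simp
  linear_combination (poch (p-(n:ℝ)-(m:ℝ)) m * poch (p-(n:ℝ)) d *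
      poch (q+1+(m:ℝ)) j) * hsq +
    (poch (q+1+(m:ℝ)) j) * star

lemma one_add_rpow_le_left {e x : ℝ} (hx : 0 ≤ x) (hx1 : x ≤ 1) :
    (1 + x) ^ e ≤ 2 ^ max e 0 := by
  rcases le_or_gt 0 e with he | he
  · calc (1+x)^e ≤ 2^e := Real.rpow_le_rpow (by linarith) (by linarith) he
    _ ≤ 2 ^ max e 0 := Real.rpow_le_rpow_of_exponent_le one_le_two (le_max_left _ _)
  · calc (1+x)^e ≤ 1 := Real.rpow_le_one_of_one_le_of_nonpos (by linarith) he.le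
    _ ≤ 2 ^ max e 0 := by rw [max_eq_right he.le, Real.rpow_zero]

lemma one_add_rpow_le_right {e x : ℝ} (hx : 1 ≤ x) :
    (1 + x) ^ e ≤ 2 ^ max e 0 * x ^ e := by
  have hx0 : (0:ℝ) < x := by linarith
  rcases le_or_gt 0 e with he | he
  · calc (1+x)^e ≤ (2*x)^e := Real.rpow_le_rpow (by linarith) (by linarith) he
    _ = 2^e * x^e := Real.mul_rpow (by norm_num) (by linarith)
    _ ≤ 2 ^ max e 0 * x ^ e :=
        mul_le_mul_of_nonneg_right
          (Real.rpow_le_rpow_of_exponent_le one_le_two (le_max_left _ _))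
          (Real.rpow_nonneg hx0.le e)
  · calc (1+x)^e ≤ x^e := Real.rpow_le_rpow_of_nonpos hx0 (by linarith) he.le
    _ = 2 ^ max e 0 * x ^ e := by rw [max_eq_right he.le, Real.rpow_zero, one_mul]

lemma contOn_aux (s c : ℝ) : ContinuousOn (fun x:ℝ => x ^ s * (1+x)^(-c)) (Ioi (0:ℝ)) := by
  intro x hx
  have hx0 : (0:ℝ) < x := hx
  apply ContinuousAt.continuousWithinAt
  apply ContinuousAt.mul
  · exact Real.continuousAt_rpow_const x s (Or.inl hx0.ne')
  · exact (Real.continuousAt_rpow_const (1+x) (-c) (Or.inl (by positivity))).comp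
      ((continuous_const.add continuous_id).continuousAt)

lemma integrable_rpow_mul {s c : ℝ} (hs : -1 < s) (hsc : s + 1 < c) :
    IntegrableOn (fun x => x ^ s * (1+x) ^ (-c)) (Ioi (0:ℝ)) := by
  rw [← Set.Ioc_union_Ioi_eq_Ioi (zero_le_one : (0:ℝ) ≤ 1)]
  refine IntegrableOn.union ?_ ?_
  · have hmeas : AEStronglyMeasurable (fun x:ℝ => x ^ s * (1+x)^(-c))
        (volume.restrict (Ioc (0:ℝ) 1)) :=
      ((contOn_aux s c).mono Ioc_subset_Ioi_self).aestronglyMeasurable measurableSet_Ioc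
    have hg : IntegrableOn (fun x : ℝ => 2 ^ max (-c) 0 * x ^ s) (Ioc (0:ℝ) 1) := by
      refine Integrable.const_mul ?_ _
      have := (intervalIntegral.intervalIntegrable_rpow' (a := 0) (b := 1) hs)
      exact (intervalIntegrable_iff_integrableOn_Ioc_of_le zero_le_one).mp this
    refine Integrable.mono hg hmeas ?_
    rw [ae_restrict_iff' measurableSet_Ioc]
    refine Filter.Eventually.of_forall fun x hx => ?_
    have hx0 : 0 < x := hx.1
    rw [Real.norm_eq_abs, Real.norm_eq_abs, abs_of_nonneg (by positivity),
      abs_of_nonneg (by positivity)]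
    calc x ^ s * (1+x)^(-c) ≤ x ^ s * 2 ^ max (-c) 0 :=
          mul_le_mul_of_nonneg_left (one_add_rpow_le_left hx0.le hx.2) (Real.rpow_nonneg hx0.le s)
    _ = 2 ^ max (-c) 0 * x ^ s := mul_comm _ _
  · have hmeas : AEStronglyMeasurable (fun x:ℝ => x ^ s * (1+x)^(-c))
        (volume.restrict (Ioi (1:ℝ))) :=
      ((contOn_aux s c).mono (Ioi_subset_Ioi zero_le_one)).aestronglyMeasurable measurableSet_Ioi
    have hg : IntegrableOn (fun x : ℝ => 2 ^ max (-c) 0 * x ^ (s - c)) (Ioi (1:ℝ)) :=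
      Integrable.const_mul (integrableOn_Ioi_rpow_of_lt (by linarith) zero_lt_one) _
    refine Integrable.mono hg hmeas ?_
    rw [ae_restrict_iff' measurableSet_Ioi]
    refine Filter.Eventually.of_forall fun x hx => ?_
    have hx1 : (1:ℝ) < x := hx
    have hx0 : 0 < x := by linarith
    rw [Real.norm_eq_abs, Real.norm_eq_abs, abs_of_nonneg (by positivity),
      abs_of_nonneg (by positivity)]
    calc x ^ s * (1+x)^(-c) ≤ x ^ s * (2 ^ max (-c) 0 * x ^ (-c)) :=
          mul_le_mul_of_nonneg_left (one_add_rpow_le_right hx1.le) (Real.rpow_nonneg hx0.le s)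
    _ = 2 ^ max (-c) 0 * x ^ (s - c) := by
          rw [sub_eq_add_neg, Real.rpow_add hx0]; ring

lemma J_rec {a c : ℝ} (ha : -1 < a) (hac : a + 2 < c) :
    (a+1) * ∫ x in Ioi (0:ℝ), x ^ a * (1+x) ^ (-c)
      = (c - a - 2) * ∫ x in Ioi (0:ℝ), x ^ (a+1) * (1+x) ^ (-c) := by
  set F := fun x : ℝ => x ^ (a+1) * (1+x) ^ (1-c) with hF
  have h1int : IntegrableOn (fun x:ℝ => x ^ a * (1+x)^(-c)) (Ioi (0:ℝ)) :=
    integrable_rpow_mul ha (by linarith)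
  have h2int : IntegrableOn (fun x:ℝ => x ^ (a+1) * (1+x)^(-c)) (Ioi (0:ℝ)) :=
    integrable_rpow_mul (by linarith) (by linarith)
  set g := fun x : ℝ => (a+1) * (x ^ a * (1+x)^(-c)) + (a+2-c) * (x^(a+1) * (1+x)^(-c)) with hg
  have hg_int : IntegrableOn g (Ioi (0:ℝ)) := (h1int.const_mul _).add (h2int.const_mul _)
  have hderiv : ∀ x ∈ Ioi (0:ℝ), HasDerivAt F (g x) x := by
    intro x hx
    have hx0 : (0:ℝ) < x := hx
    have hx1 : (0:ℝ) < 1 + x := by linarith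
    have h1 : HasDerivAt (fun y : ℝ => y ^ (a+1)) ((a+1) * x ^ a) x := by
      have := Real.hasDerivAt_rpow_const (x := x) (p := a+1) (Or.inl hx0.ne')
      simpa using this
    have h2 : HasDerivAt (fun y : ℝ => (1+y) ^ (1-c)) ((1-c) * (1+x) ^ (-c)) x := by
      have hin : HasDerivAt (fun y : ℝ => 1 + y) 1 x := (hasDerivAt_id x).const_add 1
      have := hin.rpow_const (p := 1-c) (Or.inl hx1.ne')
      have he : 1 - c - 1 = -c := by ring
      simpa [he] using this
    have hprod : HasDerivAt (fun y : ℝ => y ^ (a+1) * (1+y) ^ (1-c)) _ x := h1.mul h2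
    convert hprod using 1
    have e1 : (1+x) ^ (1-c) = (1+x) * (1+x) ^ (-c) := by
      rw [show (1:ℝ) - c = 1 + (-c) by ring, Real.rpow_add hx1, Real.rpow_one]
    have e2 : x ^ (a+1) = x ^ a * x := by
      rw [Real.rpow_add hx0, Real.rpow_one]
    simp only [hg, e1, e2]; ring
  have hcont : ContinuousWithinAt F (Ici (0:ℝ)) 0 := by
    apply ContinuousAt.continuousWithinAt
    apply ContinuousAt.mul
    · exact Real.continuousAt_rpow_const 0 (a+1) (Or.inr (by linarith))
    · have hout : ContinuousAt (fun t:ℝ => t ^ (1-c)) ((fun y:ℝ => 1 + y) 0) :=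
        Real.continuousAt_rpow_const (1+0) (1-c) (Or.inl (by norm_num))
      exact hout.comp ((continuous_const.add continuous_id).continuousAt)
  have htends : Tendsto F atTop (𝓝 0) := by
    have hlim : Tendsto (fun x:ℝ => 2 ^ max (1-c) 0 * x ^ (a+2-c)) atTop
        (𝓝 (2 ^ max (1-c) 0 * 0)) := by
      apply Tendsto.const_mul
      have := tendsto_rpow_neg_atTop (y := c - a - 2) (by linarith)
      simpa [show -(c-a-2) = a+2-c by ring] using this
    rw [mul_zero] at hlim
    apply squeeze_zero' ?_ ?_ hlim
    · filter_upwards [Filter.eventually_ge_atTop (0:ℝ)] with x hx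
      exact mul_nonneg (Real.rpow_nonneg hx _) (Real.rpow_nonneg (by linarith) _)
    · filter_upwards [Filter.eventually_ge_atTop (1:ℝ)] with x hx
      have hx0 : (0:ℝ) < x := by linarith
      calc F x ≤ x ^ (a+1) * (2 ^ max (1-c) 0 * x ^ (1-c)) :=
            mul_le_mul_of_nonneg_left (one_add_rpow_le_right hx) (Real.rpow_nonneg hx0.le _)
      _ = 2 ^ max (1-c) 0 * x ^ (a+2-c) := by
            rw [show a+2-c = (a+1) + (1-c) by ring, Real.rpow_add hx0 (a+1) (1-c), mul_left_comm]
  have key := integral_Ioi_of_hasDerivAt_of_tendsto hcont hderiv hg_int htends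
  have hF0 : F 0 = 0 := by
    rw [hF]
    simp [Real.zero_rpow (by linarith : a + 1 ≠ 0)]
  rw [hF0, sub_zero] at key
  rw [hg] at key
  rw [integral_add (h1int.const_mul _) (h2int.const_mul _), integral_const_mul, integral_const_mul]
    at key
  linarith [key]

lemma J_closed {p q : ℝ} (hq : -1 < q) : ∀ m : ℕ, (m:ℝ) ≤ p - 2 →
    ∫ x in Ioi (0:ℝ), x ^ (q + m) * (1+x) ^ (-(p+q))
      = (∏ i ∈ Finset.range m, ((q+1+i)/(p-2-i))) *
        ∫ x in Ioi (0:ℝ), x ^ q * (1+x) ^ (-(p+q)) := by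
  intro m
  induction m with
  | zero => intro _; simp
  | succ m ih =>
    intro hm
    have hmc : ((m:ℝ)+1) ≤ p - 2 := by push_cast at hm; linarith
    have hm' : (m:ℝ) ≤ p - 2 := by linarith
    have hden : (0:ℝ) < p - 2 - m := by linarith
    have hrec := J_rec (a := q + m) (c := p + q)
      (by have : (0:ℝ) ≤ m := Nat.cast_nonneg m; linarith)
      (by linarith)
    have hexp : q + ((m+1 : ℕ):ℝ) = q + ((m:ℕ):ℝ) + 1 := by push_cast; ring
    rw [hexp]
    have : ∫ x in Ioi (0:ℝ), x ^ (q + ((m:ℕ):ℝ) + 1) * (1+x) ^ (-(p+q))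
        = ((q+1+m)/(p-2-m)) * ∫ x in Ioi (0:ℝ), x ^ (q + m) * (1+x) ^ (-(p+q)) := by
      rw [div_mul_eq_mul_div, eq_div_iff hden.ne']
      linear_combination -hrec
    rw [this, ih hm', Finset.prod_range_succ]
    ring

end MbioAux

end Helpers

open MbioAux in
theorem Mbio_moment_vanishing (p q : ℝ) (υ n j : ℕ) (hυ : 0 < υ) (hq : q > -1)
    (hp : p > ((υ : ℝ) + 1) * n + 1) (hj : j < n) :
    ∫ x in Set.Ioi (0 : ℝ),
        x ^ (q + (j : ℝ)) * (1 + x) ^ (-(p + q)) * Mbio p q υ n x = 0 := by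
  have hυ1 : (1:ℝ) ≤ (υ:ℝ) := by exact_mod_cast hυ
  have hjn : (j:ℝ) ≤ (n:ℝ) - 1 := by
    have : ((j:ℕ):ℝ) + 1 ≤ (n:ℝ) := by exact_mod_cast hj
    linarith
  have hnn : (0:ℝ) ≤ (n:ℝ) := Nat.cast_nonneg n
  -- uniform bound on exponents
  have hbound : ∀ k, k ≤ n → ((j + υ*k : ℕ):ℝ) ≤ ((υ:ℝ)+1) * n - 1 := by
    intro k hk
    have hkc : ((k:ℕ):ℝ) ≤ (n:ℝ) := by exact_mod_cast hk
    push_cast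
    have : (υ:ℝ) * k ≤ (υ:ℝ) * n := mul_le_mul_of_nonneg_left hkc (by linarith)
    nlinarith
  -- Step 1: pointwise expansion of the integrand on Ioi 0
  have hpt : Set.EqOn (fun x : ℝ => x ^ (q + (j : ℝ)) * (1 + x) ^ (-(p + q)) * Mbio p q υ n x)
      (fun x : ℝ => ∑ k ∈ Finset.range (n+1),
        ((-1:ℝ)^n * poch (q+1) (υ*n) * ((-1:ℝ)^k * (n.choose k : ℝ) *
          (poch ((n:ℝ)+1-p) (υ*k) / poch (q+1) (υ*k)) * (-1:ℝ)^(υ*k))) *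
          (x ^ (q + ((j + υ*k : ℕ):ℝ)) * (1+x) ^ (-(p+q))))
      (Set.Ioi (0:ℝ)) := by
    intro x hx
    have hx0 : (0:ℝ) < x := hx
    simp only [Mbio, Finset.mul_sum]
    refine Finset.sum_congr rfl fun k _ => ?_
    have hxp : (-x)^(υ*k) = (-1:ℝ)^(υ*k) * x^(υ*k) := by rw [neg_pow]
    have hxe : x ^ (q + ((j + υ*k:ℕ):ℝ)) = x ^ (q + (j:ℝ)) * x ^ (υ*k) := by
      rw [show q + ((j + υ*k:ℕ):ℝ) = (q + (j:ℝ)) + ((υ*k:ℕ):ℝ) by push_cast; ring,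
        Real.rpow_add hx0, Real.rpow_natCast]
    rw [hxp, hxe]
    ring
  -- Step 2: integrability of each summand
  have hintk : ∀ k ∈ Finset.range (n+1),
      Integrable (fun x : ℝ =>
        ((-1:ℝ)^n * poch (q+1) (υ*n) * ((-1:ℝ)^k * (n.choose k : ℝ) *
          (poch ((n:ℝ)+1-p) (υ*k) / poch (q+1) (υ*k)) * (-1:ℝ)^(υ*k))) *
          (x ^ (q + ((j + υ*k : ℕ):ℝ)) * (1+x) ^ (-(p+q))))
        (volume.restrict (Set.Ioi (0:ℝ))) := by
    intro k hk
    rw [Finset.mem_range, Nat.lt_succ_iff] at hk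
    have hb := hbound k hk
    have hc : (0:ℝ) ≤ ((j + υ*k : ℕ):ℝ) := Nat.cast_nonneg _
    refine Integrable.const_mul ?_ _
    exact integrable_rpow_mul (by linarith) (by linarith)
  rw [MeasureTheory.setIntegral_congr_fun measurableSet_Ioi hpt,
    MeasureTheory.integral_finset_sum _ hintk]
  -- Step 3: evaluate each integral via J_closed
  have hstep : ∀ k ∈ Finset.range (n+1),
      ∫ x in Set.Ioi (0:ℝ),
        ((-1:ℝ)^n * poch (q+1) (υ*n) * ((-1:ℝ)^k * (n.choose k : ℝ) *
          (poch ((n:ℝ)+1-p) (υ*k) / poch (q+1) (υ*k)) * (-1:ℝ)^(υ*k))) *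
          (x ^ (q + ((j + υ*k : ℕ):ℝ)) * (1+x) ^ (-(p+q)))
      = ((-1:ℝ)^n * poch (q+1) (υ*n) * ((-1:ℝ)^k * (n.choose k : ℝ) *
          (poch ((n:ℝ)+1-p) (υ*k) / poch (q+1) (υ*k)) * (-1:ℝ)^(υ*k))) *
        ((∏ i ∈ Finset.range (j + υ*k), ((q+1+(i:ℝ))/(p-2-(i:ℝ)))) *
          ∫ x in Set.Ioi (0:ℝ), x ^ q * (1+x) ^ (-(p+q))) := by
    intro k hk
    rw [Finset.mem_range, Nat.lt_succ_iff] at hk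
    rw [MeasureTheory.integral_const_mul, J_closed hq (j + υ*k) (by
      have := hbound k hk; linarith)]
  rw [Finset.sum_congr rfl hstep]
  -- Step 4: the coefficient sum vanishes
  have halg : ∑ k ∈ Finset.range (n+1),
      ((-1:ℝ)^n * poch (q+1) (υ*n) * ((-1:ℝ)^k * (n.choose k : ℝ) *
        (poch ((n:ℝ)+1-p) (υ*k) / poch (q+1) (υ*k)) * (-1:ℝ)^(υ*k))) *
        (∏ i ∈ Finset.range (j + υ*k), ((q+1+(i:ℝ))/(p-2-(i:ℝ)))) = 0 := by
    have hfs := alt_sum_f p q υ n j hj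
    have hterm : ∀ k ∈ Finset.range (n+1),
        ((-1:ℝ)^n * poch (q+1) (υ*n) * ((-1:ℝ)^k * (n.choose k : ℝ) *
          (poch ((n:ℝ)+1-p) (υ*k) / poch (q+1) (υ*k)) * (-1:ℝ)^(υ*k))) *
          (∏ i ∈ Finset.range (j + υ*k), ((q+1+(i:ℝ))/(p-2-(i:ℝ))))
        = ((-1:ℝ)^n * poch (q+1) (υ*n) /
            ((∏ i ∈ Finset.range j, (p-2-(i:ℝ))) * poch (p-(n:ℝ)) (n-1-j))) *
          ((-1:ℝ)^k * (n.choose k : ℝ) *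
            (poch (q+1+((υ*k:ℕ):ℝ)) j * poch (p-(n:ℝ)-((υ*k:ℕ):ℝ)) (n-1-j))) := by
      intro k hk
      rw [Finset.mem_range, Nat.lt_succ_iff] at hk
      have hpk := per_k p q υ n j k hq hυ hj hk hp
      linear_combination ((-1:ℝ)^n * poch (q+1) (υ*n) * ((-1:ℝ)^k * (n.choose k : ℝ))) * hpk
    rw [Finset.sum_congr rfl hterm, ← Finset.mul_sum]
    rw [show (∑ k ∈ Finset.range (n+1), (-1:ℝ)^k * (n.choose k : ℝ) *
        (poch (q+1+((υ*k:ℕ):ℝ)) j * poch (p-(n:ℝ)-((υ*k:ℕ):ℝ)) (n-1-j))) = 0 from hfs]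
    rw [mul_zero]
  calc ∑ k ∈ Finset.range (n+1),
        ((-1:ℝ)^n * poch (q+1) (υ*n) * ((-1:ℝ)^k * (n.choose k : ℝ) *
          (poch ((n:ℝ)+1-p) (υ*k) / poch (q+1) (υ*k)) * (-1:ℝ)^(υ*k))) *
        ((∏ i ∈ Finset.range (j + υ*k), ((q+1+(i:ℝ))/(p-2-(i:ℝ)))) *
          ∫ x in Set.Ioi (0:ℝ), x ^ q * (1+x) ^ (-(p+q)))
      = (∑ k ∈ Finset.range (n+1),
        ((-1:ℝ)^n * poch (q+1) (υ*n) * ((-1:ℝ)^k * (n.choose k : ℝ) *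
          (poch ((n:ℝ)+1-p) (υ*k) / poch (q+1) (υ*k)) * (-1:ℝ)^(υ*k))) *
          (∏ i ∈ Finset.range (j + υ*k), ((q+1+(i:ℝ))/(p-2-(i:ℝ))))) *
          ∫ x in Set.Ioi (0:ℝ), x ^ q * (1+x) ^ (-(p+q)) := by
        rw [Finset.sum_mul]
        exact Finset.sum_congr rfl fun k _ => by ring
  _ = 0 := by rw [halg, zero_mul]
end
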